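/- arXiv:2102.09313 — 4 statements merged into one kernel-verified Lean document; each statement's English description precedes it below -/
import Mathlib

section
/- Let G be an N-function of class C² on (0,∞) with G' = g and suppose 2 ≤ i_G ≤ s_G < ∞ where i_G = inf tg(t)/G(t), s_G = sup tg(t)/G(t). Fix s with max{2−i_G, 0} < s < 1/2 and define H_s(t) = ∫_0^t g(r)^{1-s} G(r)^s / r dr. Then H_s is comparable to g(t)^{1-s} G(t)^s: there exist constants depending only on i_G, s_G, s such that H_s(t) ≈ g(t)^{1-s} G(t)^s for all t > 0. -/
/-!
Since `i_G G ≤ t g ≤ s_G G`, the quantity `g^{1-s} G^s` lies between `i_G^{1-s}` and `s_G^{1-s}`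
times `G(t) t^{s-1}`, while `G(t) t^{-i_G}` is nondecreasing and `G(t) t^{-s_G}` nonincreasing.
Hence for `0 < r ≤ t` the integrand is bounded above and below by multiples of
`G(t) t^{s-1} r^{a-1} / t^a`, with `a = i_G + s - 1` and `a = s_G + s - 1` respectively, and since
`a > 0` this integrates over `(0, t)` to `G(t) t^{s-1} / a`.
-/

open Real MeasureTheory Set intervalIntegral

section Comparability

variable {a b k x s : ℝ}

lemma rpow_one_sub_mul_rpow_eq (hx : 0 < x) (hb : 0 < b) (ha : 0 ≤ a) :
    a ^ (1 - s) * b ^ s = (x * a / b) ^ (1 - s) * (b * x ^ (s - 1)) := by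
  have hxs : x ^ (1 - s) * x ^ (s - 1) = 1 := by
    rw [← rpow_add hx, show 1 - s + (s - 1) = 0 by ring, rpow_zero]
  have hbs : b ^ s * b ^ (1 - s) = b := by
    rw [← rpow_add hb, show s + (1 - s) = 1 by ring, rpow_one]
  rw [div_rpow (by positivity) hb.le, mul_rpow hx.le ha]
  field_simp
  linear_combination a ^ (1 - s) * hbs - a ^ (1 - s) * b * hxs

lemma rpow_one_sub_mul_rpow_le (hx : 0 < x) (hb : 0 < b) (ha : 0 ≤ a) (hs : s ≤ 1)
    (h : x * a ≤ k * b) : a ^ (1 - s) * b ^ s ≤ k ^ (1 - s) * (b * x ^ (s - 1)) := by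
  rw [rpow_one_sub_mul_rpow_eq hx hb ha]
  exact mul_le_mul_of_nonneg_right (rpow_le_rpow (div_nonneg (mul_nonneg hx.le ha) hb.le)
    ((div_le_iff₀ hb).2 h) (by linarith)) (by positivity)

lemma nonneg_of_mul_le_mul (hx : 0 < x) (hb : 0 ≤ b) (hk : 0 ≤ k) (h : k * b ≤ x * a) :
    0 ≤ a :=
  nonneg_of_mul_nonneg_right ((mul_nonneg hk hb).trans h) hx

lemma le_rpow_one_sub_mul_rpow (hx : 0 < x) (hb : 0 < b) (hk : 0 ≤ k) (hs : s ≤ 1)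
    (h : k * b ≤ x * a) : k ^ (1 - s) * (b * x ^ (s - 1)) ≤ a ^ (1 - s) * b ^ s := by
  have ha : 0 ≤ a := nonneg_of_mul_le_mul hx hb.le hk h
  rw [rpow_one_sub_mul_rpow_eq hx hb ha]
  exact mul_le_mul_of_nonneg_right (rpow_le_rpow (by positivity) ((le_div_iff₀ hb).2 h)
    (by linarith)) (by positivity)

lemma mul_rpow_neg_mul_rpow {p : ℝ} (hx : 0 < x) : b * x ^ (-p) * x ^ p = b := by
  rw [mul_assoc, ← rpow_add hx, neg_add_cancel, rpow_zero, mul_one]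

end Comparability

section Growth

variable {G g : ℝ → ℝ} {p : ℝ}

lemma hasDerivAt_mul_rpow_neg {x : ℝ} (hG : HasDerivAt G (g x) x) (hx : 0 < x) :
    HasDerivAt (fun y => G y * y ^ (-p)) (x ^ (-p - 1) * (x * g x - p * G x)) x := by
  refine (hG.mul (hasDerivAt_rpow_const (p := -p) (Or.inl hx.ne'))).congr_deriv ?_
  rw [show x ^ (-p) = x ^ (-p - 1) * x by rw [← rpow_add_one hx.ne']; ring_nf]
  ring

lemma monotoneOn_mul_rpow_neg (hG' : ∀ x, 0 < x → HasDerivAt G (g x) x)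
    (h : ∀ x, 0 < x → p * G x ≤ x * g x) : MonotoneOn (fun x => G x * x ^ (-p)) (Ioi 0) := by
  refine monotoneOn_of_hasDerivWithinAt_nonneg (convex_Ioi 0)
    (f' := fun x => x ^ (-p - 1) * (x * g x - p * G x))
    (fun x hx => (hasDerivAt_mul_rpow_neg (hG' x hx) hx).continuousAt.continuousWithinAt)
    (fun x hx => ?_) (fun x hx => ?_)
  all_goals rw [interior_Ioi] at hx
  · exact (hasDerivAt_mul_rpow_neg (hG' x hx) hx).hasDerivWithinAt
  · exact mul_nonneg (rpow_pos_of_pos hx _).le (sub_nonneg.2 (h x hx))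

lemma antitoneOn_mul_rpow_neg (hG' : ∀ x, 0 < x → HasDerivAt G (g x) x)
    (h : ∀ x, 0 < x → x * g x ≤ p * G x) : AntitoneOn (fun x => G x * x ^ (-p)) (Ioi 0) := by
  refine antitoneOn_of_hasDerivWithinAt_nonpos (convex_Ioi 0)
    (f' := fun x => x ^ (-p - 1) * (x * g x - p * G x))
    (fun x hx => (hasDerivAt_mul_rpow_neg (hG' x hx) hx).continuousAt.continuousWithinAt)
    (fun x hx => ?_) (fun x hx => ?_)
  all_goals rw [interior_Ioi] at hx
  · exact (hasDerivAt_mul_rpow_neg (hG' x hx) hx).hasDerivWithinAt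
  · exact mul_nonpos_of_nonneg_of_nonpos (rpow_pos_of_pos hx _).le (sub_nonpos.2 (h x hx))

end Growth

section Integrals

variable {f : ℝ → ℝ} {a C t : ℝ}

lemma integral_rpow_sub_one (ha : 0 < a) : ∫ r in (0:ℝ)..t, r ^ (a - 1) = t ^ a / a := by
  rw [integral_rpow (Or.inl (by linarith)), sub_add_cancel, zero_rpow ha.ne', sub_zero]

lemma intervalIntegrable_of_le_rpow (ha : 0 < a) (ht : 0 ≤ t)
    (hf : AEStronglyMeasurable f (volume.restrict (Ioc 0 t)))
    (hle : ∀ r ∈ Ioc 0 t, 0 ≤ f r ∧ f r ≤ C * r ^ (a - 1)) :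
    IntervalIntegrable f volume 0 t := by
  refine ((intervalIntegrable_rpow' (r := a - 1) (by linarith)).const_mul C).mono_fun'
    (by rwa [uIoc_of_le ht]) ?_
  rw [uIoc_of_le ht]
  filter_upwards [ae_restrict_mem measurableSet_Ioc] with r hr
  rw [Real.norm_of_nonneg (hle r hr).1]
  exact (hle r hr).2

lemma integral_le_of_le_rpow (ha : 0 < a) (ht : 0 ≤ t) (hf : IntervalIntegrable f volume 0 t)
    (hle : ∀ r ∈ Ioc 0 t, f r ≤ C * r ^ (a - 1)) :
    ∫ r in (0:ℝ)..t, f r ≤ C * (t ^ a / a) := by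
  rw [← integral_rpow_sub_one ha, ← intervalIntegral.integral_const_mul]
  exact integral_mono_on_of_le_Ioo ht hf ((intervalIntegrable_rpow' (by linarith)).const_mul C)
    fun r hr => hle r (Ioo_subset_Ioc_self hr)

lemma le_integral_of_rpow_le (ha : 0 < a) (ht : 0 ≤ t) (hf : IntervalIntegrable f volume 0 t)
    (hle : ∀ r ∈ Ioc 0 t, C * r ^ (a - 1) ≤ f r) :
    C * (t ^ a / a) ≤ ∫ r in (0:ℝ)..t, f r := by
  rw [← integral_rpow_sub_one ha, ← intervalIntegral.integral_const_mul]
  exact integral_mono_on_of_le_Ioo ht ((intervalIntegrable_rpow' (by linarith)).const_mul C) hf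
    fun r hr => hle r (Ioo_subset_Ioc_self hr)

end Integrals

section Integrand

variable {G g : ℝ → ℝ} {p q s t r : ℝ}

lemma rpow_mul_rpow_div_le_of_growth (hG' : ∀ x, 0 < x → HasDerivAt G (g x) x)
    (hGpos : ∀ x, 0 < x → 0 < G x) (hlow : ∀ x, 0 < x → p * G x ≤ x * g x)
    (hup : ∀ x, 0 < x → x * g x ≤ q * G x) (hp : 0 ≤ p) (hs : s ≤ 1) (hr : 0 < r)
    (hrt : r ≤ t) :
    g r ^ (1 - s) * G r ^ s / r ≤ q ^ (1 - s) * (G t * t ^ (-p)) * r ^ (p + s - 1 - 1) := by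
  have hGr := hGpos r hr
  have hgr := nonneg_of_mul_le_mul hr hGr.le hp (hlow r hr)
  have hq : 0 ≤ q := nonneg_of_mul_nonneg_left ((mul_nonneg hr.le hgr).trans (hup r hr)) hGr
  have hGrt : G r ≤ G t * t ^ (-p) * r ^ p :=
    calc G r = G r * r ^ (-p) * r ^ p := (mul_rpow_neg_mul_rpow hr).symm
      _ ≤ G t * t ^ (-p) * r ^ p := mul_le_mul_of_nonneg_right
          (monotoneOn_mul_rpow_neg hG' hlow hr (hr.trans_le hrt) hrt) (by positivity)
  have hpow : r ^ p * r ^ (s - 1) / r = r ^ (p + s - 1 - 1) := by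
    rw [← rpow_add hr, ← rpow_sub_one hr.ne']; ring_nf
  calc g r ^ (1 - s) * G r ^ s / r ≤ q ^ (1 - s) * (G r * r ^ (s - 1)) / r := by
        gcongr ?_ / _; exact rpow_one_sub_mul_rpow_le hr hGr hgr hs (hup r hr)
    _ ≤ q ^ (1 - s) * (G t * t ^ (-p) * r ^ p * r ^ (s - 1)) / r := by gcongr
    _ = q ^ (1 - s) * (G t * t ^ (-p)) * r ^ (p + s - 1 - 1) := by rw [← hpow]; ring

lemma le_rpow_mul_rpow_div_of_growth (hG' : ∀ x, 0 < x → HasDerivAt G (g x) x)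
    (hGpos : ∀ x, 0 < x → 0 < G x) (hlow : ∀ x, 0 < x → p * G x ≤ x * g x)
    (hup : ∀ x, 0 < x → x * g x ≤ q * G x) (hp : 0 ≤ p) (hs : s ≤ 1) (hr : 0 < r)
    (hrt : r ≤ t) :
    p ^ (1 - s) * (G t * t ^ (-q)) * r ^ (q + s - 1 - 1) ≤ g r ^ (1 - s) * G r ^ s / r := by
  have hGrt : G t * t ^ (-q) * r ^ q ≤ G r :=
    calc G t * t ^ (-q) * r ^ q ≤ G r * r ^ (-q) * r ^ q := mul_le_mul_of_nonneg_right
          (antitoneOn_mul_rpow_neg hG' hup hr (hr.trans_le hrt) hrt) (by positivity)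
      _ = G r := mul_rpow_neg_mul_rpow hr
  have hpow : r ^ q * r ^ (s - 1) / r = r ^ (q + s - 1 - 1) := by
    rw [← rpow_add hr, ← rpow_sub_one hr.ne']; ring_nf
  calc p ^ (1 - s) * (G t * t ^ (-q)) * r ^ (q + s - 1 - 1)
        = p ^ (1 - s) * (G t * t ^ (-q) * r ^ q * r ^ (s - 1)) / r := by rw [← hpow]; ring
    _ ≤ p ^ (1 - s) * (G r * r ^ (s - 1)) / r := by gcongr
    _ ≤ g r ^ (1 - s) * G r ^ s / r := by
        gcongr ?_ / _; exact le_rpow_one_sub_mul_rpow hr (hGpos r hr) hp hs (hlow r hr)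

lemma intervalIntegrable_rpow_mul_rpow_div (hG' : ∀ x, 0 < x → HasDerivAt G (g x) x)
    (hGpos : ∀ x, 0 < x → 0 < G x) (hlow : ∀ x, 0 < x → p * G x ≤ x * g x)
    (hup : ∀ x, 0 < x → x * g x ≤ q * G x) (hp : 0 ≤ p) (hps : 0 < p + s - 1) (hs : s ≤ 1)
    (ht : 0 < t) : IntervalIntegrable (fun r => g r ^ (1 - s) * G r ^ s / r) volume 0 t := by
  have hgd : g =ᵐ[volume.restrict (Ioc 0 t)] deriv G := by
    filter_upwards [ae_restrict_mem measurableSet_Ioc] with r hr using (hG' r hr.1).deriv.symm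
  have hGc : ContinuousOn G (Ioc 0 t) :=
    fun x hx => (hG' x hx.1).continuousAt.continuousWithinAt
  have hmeas : AEStronglyMeasurable (fun r => g r ^ (1 - s) * G r ^ s / r)
      (volume.restrict (Ioc 0 t)) :=
    ((((measurable_deriv G).aemeasurable.congr hgd.symm).pow_const _).mul
      ((hGc.aemeasurable measurableSet_Ioc).pow_const _) |>.div aemeasurable_id).aestronglyMeasurable
  refine intervalIntegrable_of_le_rpow hps ht.le hmeas fun r ⟨hr, hrt⟩ => ⟨?_,
    rpow_mul_rpow_div_le_of_growth hG' hGpos hlow hup hp hs hr hrt⟩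
  have := nonneg_of_mul_le_mul hr (hGpos r hr).le hp (hlow r hr)
  have := hGpos r hr
  positivity

lemma integral_rpow_mul_rpow_div_le (hG' : ∀ x, 0 < x → HasDerivAt G (g x) x)
    (hGpos : ∀ x, 0 < x → 0 < G x) (hlow : ∀ x, 0 < x → p * G x ≤ x * g x)
    (hup : ∀ x, 0 < x → x * g x ≤ q * G x) (hp : 0 ≤ p) (hps : 0 < p + s - 1) (hs : s ≤ 1)
    (ht : 0 < t) :
    ∫ r in (0:ℝ)..t, g r ^ (1 - s) * G r ^ s / r ≤
      q ^ (1 - s) / (p + s - 1) * (G t * t ^ (s - 1)) := by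
  have hpow : t ^ (-p) * t ^ (p + s - 1) = t ^ (s - 1) := by rw [← rpow_add ht]; ring_nf
  refine (integral_le_of_le_rpow hps ht.le
    (intervalIntegrable_rpow_mul_rpow_div hG' hGpos hlow hup hp hps hs ht)
    fun r ⟨hr, hrt⟩ => rpow_mul_rpow_div_le_of_growth hG' hGpos hlow hup hp hs hr hrt).trans_eq ?_
  rw [← hpow]; ring

lemma le_integral_rpow_mul_rpow_div (hG' : ∀ x, 0 < x → HasDerivAt G (g x) x)
    (hGpos : ∀ x, 0 < x → 0 < G x) (hlow : ∀ x, 0 < x → p * G x ≤ x * g x)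
    (hup : ∀ x, 0 < x → x * g x ≤ q * G x) (hp : 0 ≤ p) (hps : 0 < p + s - 1)
    (hqs : 0 < q + s - 1) (hs : s ≤ 1) (ht : 0 < t) :
    p ^ (1 - s) / (q + s - 1) * (G t * t ^ (s - 1)) ≤
      ∫ r in (0:ℝ)..t, g r ^ (1 - s) * G r ^ s / r := by
  have hpow : t ^ (-q) * t ^ (q + s - 1) = t ^ (s - 1) := by rw [← rpow_add ht]; ring_nf
  refine le_trans (le_of_eq ?_) (le_integral_of_rpow_le hqs ht.le
    (intervalIntegrable_rpow_mul_rpow_div hG' hGpos hlow hup hp hps hs ht)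
    fun r ⟨hr, hrt⟩ => le_rpow_mul_rpow_div_of_growth hG' hGpos hlow hup hp hs hr hrt)
  rw [← hpow]; ring

end Integrand

theorem Hs_comparable_general
    (G g : ℝ → ℝ) (iG sG s : ℝ)
    (hG' : ∀ t, 0 < t → HasDerivAt G (g t) t)
    (hGpos : ∀ t, 0 < t → 0 < G t)
    (hle : iG ≤ sG)
    (hbd : ∀ t, 0 < t → iG * G t ≤ t * g t ∧ t * g t ≤ sG * G t)
    (hs₁ : max (2 - iG) 0 < s) (hs₂ : s < 1 / 2) :
    ∃ c₁ c₂ : ℝ, 0 < c₁ ∧ 0 < c₂ ∧ ∀ t, 0 < t →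
      c₁ * (g t ^ (1 - s) * G t ^ s) ≤
        (∫ r in (0:ℝ)..t, g r ^ (1 - s) * G r ^ s / r) ∧
      (∫ r in (0:ℝ)..t, g r ^ (1 - s) * G r ^ s / r) ≤
        c₂ * (g t ^ (1 - s) * G t ^ s) := by
  obtain ⟨hiG, hs0⟩ := max_lt_iff.1 hs₁
  have hs : s ≤ 1 := by linarith
  have hi : 0 < iG := by linarith
  have hsG : 0 < sG := by linarith
  have his : 0 < iG + s - 1 := by linarith
  have hss : 0 < sG + s - 1 := by linarith
  have hlow := fun t ht => (hbd t ht).1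
  have hup := fun t ht => (hbd t ht).2
  refine ⟨(iG / sG) ^ (1 - s) / (sG + s - 1), (sG / iG) ^ (1 - s) / (iG + s - 1),
    by positivity, by positivity, fun t ht => ⟨?_, ?_⟩⟩
  · have hgt := nonneg_of_mul_le_mul ht (hGpos t ht).le hi.le (hlow t ht)
    calc (iG / sG) ^ (1 - s) / (sG + s - 1) * (g t ^ (1 - s) * G t ^ s)
        ≤ (iG / sG) ^ (1 - s) / (sG + s - 1) * (sG ^ (1 - s) * (G t * t ^ (s - 1))) := by
          gcongr _ * ?_; exact rpow_one_sub_mul_rpow_le ht (hGpos t ht) hgt hs (hup t ht)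
      _ = iG ^ (1 - s) / (sG + s - 1) * (G t * t ^ (s - 1)) := by
          rw [div_rpow hi.le (by linarith)]; field_simp
      _ ≤ _ := le_integral_rpow_mul_rpow_div hG' hGpos hlow hup hi.le his hss hs ht
  · calc _ ≤ sG ^ (1 - s) / (iG + s - 1) * (G t * t ^ (s - 1)) :=
          integral_rpow_mul_rpow_div_le hG' hGpos hlow hup hi.le his hs ht
      _ = (sG / iG) ^ (1 - s) / (iG + s - 1) * (iG ^ (1 - s) * (G t * t ^ (s - 1))) := by
          rw [div_rpow (by linarith) hi.le]; field_simp
      _ ≤ (sG / iG) ^ (1 - s) / (iG + s - 1) * (g t ^ (1 - s) * G t ^ s) := by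
          gcongr _ * ?_; exact le_rpow_one_sub_mul_rpow ht (hGpos t ht) hi.le hs (hlow t ht)

/-- The auxiliary function H_s(t) = ∫_0^t g(r)^{1-s} G(r)^s / r dr is
comparable to g(t)^{1-s} G(t)^s. -/
theorem Hs_comparable
    (G g : ℝ → ℝ) (iG sG s : ℝ)
    (hGC2 : ContDiffOn ℝ 2 G (Set.Ioi 0))
    (hG' : ∀ t, 0 < t → HasDerivAt G (g t) t)
    (hGpos : ∀ t, 0 < t → 0 < G t)
    (hgpos : ∀ t, 0 < t → 0 < g t)
    (h2 : 2 ≤ iG) (hle : iG ≤ sG)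
    (hbd : ∀ t, 0 < t → iG * G t ≤ t * g t ∧ t * g t ≤ sG * G t)
    (hs₁ : max (2 - iG) 0 < s) (hs₂ : s < 1 / 2) :
    ∃ c₁ c₂ : ℝ, 0 < c₁ ∧ 0 < c₂ ∧ ∀ t, 0 < t →
      c₁ * (g t ^ (1 - s) * G t ^ s) ≤
        (∫ r in (0:ℝ)..t, g r ^ (1 - s) * G r ^ s / r) ∧
      (∫ r in (0:ℝ)..t, g r ^ (1 - s) * G r ^ s / r) ≤
        c₂ * (g t ^ (1 - s) * G t ^ s) :=
  Hs_comparable_general G g iG sG s hG' hGpos hle hbd hs₁ hs₂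
end

section
/- Let Ω ⊂ ℝ^n be a bounded Lipschitz domain, n ≥ 1, and G an N-function in Δ₂ ∩ ∇₂ with derivative g satisfying tg(t) ≤ s_G G(t) and G*(G(t)/t) ≤ G(t) (up to constants). Then there is C = C(n, m, |Ω|, G) such that for every u ∈ W₀^{1,G}(Ω, ℝ^m), ∫_Ω G(|u|)^{n'} dx ≤ C (∫_Ω G(|Du|) dx)^{n'}, where n' = n/(n−1). -/
/-!
For `ε > 0` put `v = G(√(|u|² + ε²)) - G(ε)`. It is `C¹` (the derivative of a convex function
is continuous, by Darboux), nonnegative, supported in `Ω`, and `G(|u|) ≤ v + G(ε)`.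
Gagliardo–Nirenberg–Sobolev bounds `‖v‖_{n'}` by `‖Dv‖₁`, where `|Dv| ≤ g(√(|u|² + ε²)) |Du|`.
A Young-type inequality based on `t g(t) ≤ s_G G(t)` turns this into
`|Dv| ≤ (s_G/κ)(v + G(ε)) + C_κ G(|Du|)`, and since `‖v‖_{L¹(Ω)} ≲ |Ω|^{1/n} ‖Dv‖₁`
(GNS and Hölder) the `v` term is absorbed once `κ` is large.
Letting `ε → 0` gives `‖G(|u|)‖_{L^{n'}(Ω)} ≤ C ‖G(|Du|)‖_{L¹(Ω)}`.
-/

open MeasureTheory Set Filter Topology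
open scoped ENNReal NNReal

section ConvexDeriv

variable {f f' : ℝ → ℝ} {S : Set ℝ}

theorem ConvexOn.monotoneOn_of_hasDerivAt (hf : ConvexOn ℝ S f)
    (hf' : ∀ x ∈ S, HasDerivAt f (f' x) x) : MonotoneOn f' S :=
  (hf.monotoneOn_deriv fun x hx => (hf' x hx).differentiableAt).congr
    fun x hx => (hf' x hx).deriv

/-- By Darboux's theorem `f'` maps `S` onto an interval, and a monotone map onto an interval
has no jumps. -/
theorem ConvexOn.continuousOn_of_hasDerivAt [hS : S.OrdConnected] (hf : ConvexOn ℝ S f)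
    (hf' : ∀ x ∈ S, HasDerivAt f (f' x) x) : ContinuousOn f' S := by
  have : (f' '' S).OrdConnected :=
    hS.image_hasDerivWithinAt fun x hx => (hf' x hx).hasDerivWithinAt
  let φ : S → f' '' S := fun x => ⟨f' x, mem_image_of_mem f' x.2⟩
  have hφ : Continuous φ :=
    Monotone.continuous_of_surjective
      (fun x y hxy => (hf.monotoneOn_of_hasDerivAt hf' x.2 y.2 hxy : f' x ≤ f' y))
      (by rintro ⟨_, x, hx, rfl⟩; exact ⟨⟨x, hx⟩, rfl⟩)
  exact continuousOn_iff_continuous_domRestrict.2 (continuous_subtype_val.comp hφ)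

theorem contDiffOn_one_of_hasDerivAt (hS : IsOpen S) (hf' : ∀ x ∈ S, HasDerivAt f (f' x) x)
    (hc : ContinuousOn f' S) : ContDiffOn ℝ 1 f S := by
  rw [show (1 : WithTop ℕ∞) = 0 + 1 from rfl, contDiffOn_succ_iff_deriv_of_isOpen hS]
  refine ⟨fun x hx => (hf' x hx).differentiableAt.differentiableWithinAt, by simp, ?_⟩
  exact contDiffOn_zero.2 (hc.congr fun x hx => (hf' x hx).deriv)

end ConvexDeriv

section NFunction

variable {G g : ℝ → ℝ} {sG : ℝ}

theorem ConvexOn.map_mul_le_mul_of_map_zero (hG : ConvexOn ℝ (Ici 0) G) (hG0 : G 0 = 0)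
    {θ x : ℝ} (hθ0 : 0 ≤ θ) (hθ1 : θ ≤ 1) (hx : 0 ≤ x) : G (θ * x) ≤ θ * G x := by
  simpa [hG0] using hG.2 (self_mem_Ici : (0 : ℝ) ∈ Ici 0) (mem_Ici.2 hx) (sub_nonneg.2 hθ1) hθ0
    (sub_add_cancel 1 θ)

theorem ConvexOn.monotoneOn_of_map_zero (hG : ConvexOn ℝ (Ici 0) G) (hG0 : G 0 = 0)
    (hG_nonneg : ∀ t, 0 ≤ t → 0 ≤ G t) : MonotoneOn G (Ici 0) := by
  intro a ha b hb hab
  rcases (mem_Ici.1 ha |>.trans hab).eq_or_lt with hb0 | hb0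
  · rw [le_antisymm hab (hb0 ▸ mem_Ici.1 ha)]
  calc G a = G (a / b * b) := by rw [div_mul_cancel₀ a hb0.ne']
    _ ≤ a / b * G b := hG.map_mul_le_mul_of_map_zero hG0 (div_nonneg ha hb)
        ((div_le_one hb0).2 hab) hb
    _ ≤ G b := mul_le_of_le_one_left (hG_nonneg b hb) ((div_le_one hb0).2 hab)

theorem ConvexOn.continuousWithinAt_zero_of_map_zero (hG : ConvexOn ℝ (Ici 0) G) (hG0 : G 0 = 0)
    (hG_nonneg : ∀ t, 0 ≤ t → 0 ≤ G t) : ContinuousWithinAt G (Ici 0) 0 := by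
  have hlin : Tendsto (fun t => t * G 1) (𝓝[≥] 0) (𝓝 0) := by
    simpa using ((continuous_mul_const (G 1)).tendsto 0).mono_left nhdsWithin_le_nhds
  rw [ContinuousWithinAt, hG0]
  refine tendsto_of_tendsto_of_tendsto_of_le_of_le' tendsto_const_nhds hlin ?_ ?_
  · filter_upwards [self_mem_nhdsWithin] with t ht using hG_nonneg t ht
  · filter_upwards [self_mem_nhdsWithin, Ico_mem_nhdsGE zero_lt_one] with t ht ht1
    simpa using hG.map_mul_le_mul_of_map_zero hG0 ht ht1.2.le zero_le_one

theorem ConvexOn.nonneg_of_hasDerivAt_of_map_zero (hG : ConvexOn ℝ (Ici 0) G) (hG0 : G 0 = 0)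
    (hG_nonneg : ∀ t, 0 ≤ t → 0 ≤ G t) {t : ℝ} (ht : 0 < t) (hg : HasDerivAt G (g t) t) :
    0 ≤ g t := by
  have := hG.slope_le_of_hasDerivAt self_mem_Ici ht.le ht hg
  rw [slope_def_field, hG0, sub_zero, sub_zero] at this
  exact (div_nonneg (hG_nonneg t ht.le) ht.le).trans this

theorem ConvexOn.contDiffOn_Ioi_of_hasDerivAt (hG : ConvexOn ℝ (Ici 0) G)
    (hG' : ∀ t, 0 < t → HasDerivAt G (g t) t) : ContDiffOn ℝ 1 G (Ioi 0) :=
  contDiffOn_one_of_hasDerivAt isOpen_Ioi hG' <|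
    (hG.subset Ioi_subset_Ici_self (convex_Ioi 0)).continuousOn_of_hasDerivAt hG'

/-- The Δ₂ condition `t g(t) ≤ s G(t)` says that `G(λ a) / λ ^ s` decreases in `λ`. -/
theorem map_mul_le_rpow_mul_of_mul_deriv_le (hG0 : G 0 = 0)
    (hG' : ∀ t, 0 < t → HasDerivAt G (g t) t) (hΔ₂ : ∀ t, 0 < t → t * g t ≤ sG * G t)
    {a κ : ℝ} (ha : 0 ≤ a) (hκ : 1 ≤ κ) : G (κ * a) ≤ κ ^ sG * G a := by
  rcases ha.eq_or_lt with rfl | ha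
  · simp [hG0]
  have hderiv : ∀ l, 0 < l → HasDerivAt (fun l => G (l * a) / l ^ sG)
      ((g (l * a) * a * l ^ sG - G (l * a) * (sG * l ^ (sG - 1))) / (l ^ sG) ^ 2) l :=
    fun l hl => ((hG' _ (by positivity)).comp l (hasDerivAt_mul_const a)).div
      (Real.hasDerivAt_rpow_const (Or.inl hl.ne')) (by positivity)
  have hanti : AntitoneOn (fun l => G (l * a) / l ^ sG) (Ici 1) := by
    refine antitoneOn_of_deriv_nonpos (convex_Ici 1)
      (fun l hl => (hderiv l (zero_lt_one.trans_le hl)).continuousAt.continuousWithinAt)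
      (fun l hl => ?_) (fun l hl => ?_) <;> rw [interior_Ici] at hl
    · exact (hderiv l (zero_lt_one.trans hl)).differentiableAt.differentiableWithinAt
    have hl0 : 0 < l := zero_lt_one.trans hl
    rw [(hderiv l hl0).deriv]
    refine div_nonpos_of_nonpos_of_nonneg (sub_nonpos.2 ?_) (sq_nonneg _)
    have hpow : l ^ sG = l ^ (sG - 1) * l := by
      rw [← Real.rpow_add_one hl0.ne', sub_add_cancel]
    calc g (l * a) * a * l ^ sG = (l * a * g (l * a)) * l ^ (sG - 1) := by rw [hpow]; ring
      _ ≤ (sG * G (l * a)) * l ^ (sG - 1) :=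
        mul_le_mul_of_nonneg_right (hΔ₂ _ (by positivity)) (by positivity)
      _ = G (l * a) * (sG * l ^ (sG - 1)) := by ring
  have := hanti self_mem_Ici hκ hκ
  simp only [one_mul, Real.one_rpow, div_one] at this
  rwa [div_le_iff₀ (by positivity), mul_comm (G a)] at this

/-- A Young-type inequality `a g(t) ≤ G*(g(t)) + G(a)`, the conjugate term `G*(g(t))` being
traded for `G(t)` through Δ₂; the weight `κ` makes the coefficient of `G(t)` small. -/
theorem mul_deriv_le_div_mul_add_rpow_mul (hG : ConvexOn ℝ (Ici 0) G) (hG0 : G 0 = 0)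
    (hG_nonneg : ∀ t, 0 ≤ t → 0 ≤ G t) (hG' : ∀ t, 0 < t → HasDerivAt G (g t) t)
    (hΔ₂ : ∀ t, 0 < t → t * g t ≤ sG * G t) (hsG : 0 ≤ sG)
    {t a κ : ℝ} (ht : 0 < t) (ha : 0 ≤ a) (hκ : 1 ≤ κ) :
    a * g t ≤ sG / κ * G t + sG * κ ^ (sG - 1) * G a := by
  have hκ0 : 0 < κ := zero_lt_one.trans_le hκ
  have hgt := hG.nonneg_of_hasDerivAt_of_map_zero hG0 hG_nonneg ht (hG' t ht)
  have hGt := hG_nonneg t ht.le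
  have hGa := hG_nonneg a ha
  rcases le_or_gt (κ * a) t with h | h
  · have : a * g t ≤ sG / κ * G t := by
      rw [div_mul_eq_mul_div, le_div_iff₀ hκ0]
      calc a * g t * κ = κ * a * g t := by ring
        _ ≤ t * g t := mul_le_mul_of_nonneg_right h hgt
        _ ≤ sG * G t := hΔ₂ t ht
    have : 0 ≤ sG * κ ^ (sG - 1) * G a := by positivity
    linarith
  · have hκa : 0 < κ * a := ht.trans h
    have hmono : g t ≤ g (κ * a) :=
      (hG.subset Ioi_subset_Ici_self (convex_Ioi 0)).monotoneOn_of_hasDerivAt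
        (fun x hx => hG' x hx) ht hκa h.le
    have : a * g t ≤ sG * κ ^ (sG - 1) * G a := by
      refine le_of_mul_le_mul_left ?_ hκ0
      calc κ * (a * g t) ≤ κ * a * g (κ * a) := by
            rw [← mul_assoc]; exact mul_le_mul_of_nonneg_left hmono hκa.le
        _ ≤ sG * G (κ * a) := hΔ₂ _ hκa
        _ ≤ sG * (κ ^ sG * G a) := mul_le_mul_of_nonneg_left
            (map_mul_le_rpow_mul_of_mul_deriv_le hG0 hG' hΔ₂ ha hκ) hsG
        _ = κ * (sG * κ ^ (sG - 1) * G a) := by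
            rw [Real.rpow_sub hκ0, Real.rpow_one]; field_simp
    have : 0 ≤ sG / κ * G t := by positivity
    linarith

end NFunction

section RegNorm

variable {F : Type*} [NormedAddCommGroup F]

noncomputable def regNorm (ε : ℝ) (x : F) : ℝ := √(‖x‖ ^ 2 + ε ^ 2)

variable {ε : ℝ}

theorem norm_le_regNorm (ε : ℝ) (x : F) : ‖x‖ ≤ regNorm ε x :=
  Real.le_sqrt_of_sq_le (le_add_of_nonneg_right (sq_nonneg ε))

theorem abs_le_regNorm (ε : ℝ) (x : F) : |ε| ≤ regNorm ε x :=
  Real.abs_le_sqrt (le_add_of_nonneg_left (sq_nonneg _))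

@[simp]
theorem regNorm_zero (ε : ℝ) : regNorm ε (0 : F) = |ε| := by
  simp [regNorm, Real.sqrt_sq_eq_abs]

theorem regNorm_pos (hε : ε ≠ 0) (x : F) : 0 < regNorm ε x :=
  (abs_pos.2 hε).trans_le (abs_le_regNorm ε x)

theorem tsupport_comp_regNorm_sub_subset {E : Type*} [TopologicalSpace E] (G : ℝ → ℝ)
    (u : E → F) (hε : 0 ≤ ε) : tsupport (fun x => G (regNorm ε (u x)) - G ε) ⊆ tsupport u :=
  closure_minimal (fun x hx => subset_tsupport u fun hux => hx (by simp [hux, abs_of_nonneg hε]))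
    (isClosed_tsupport u)

variable [InnerProductSpace ℝ F]

theorem contDiff_regNorm (hε : ε ≠ 0) : ContDiff ℝ 1 (regNorm (F := F) ε) :=
  (contDiff_norm_sq ℝ |>.add contDiff_const).sqrt fun x => by positivity

theorem norm_fderiv_regNorm_le_one (hε : ε ≠ 0) (x : F) : ‖fderiv ℝ (regNorm ε) x‖ ≤ 1 := by
  have hpos := regNorm_pos hε x
  have hD := ((hasFDerivAt_id x).norm_sq.add_const (ε ^ 2)).sqrt (by positivity)
  rw [show regNorm ε = fun y : F => √(‖id y‖ ^ 2 + ε ^ 2) from rfl, hD.fderiv]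
  refine ContinuousLinearMap.opNorm_le_bound _ zero_le_one fun h => ?_
  have hinner : |inner ℝ x h| ≤ regNorm ε x * ‖h‖ :=
    (abs_real_inner_le_norm x h).trans (by gcongr; exact norm_le_regNorm ε x)
  simp only [id_eq, one_div, mul_inv_rev, ContinuousLinearMap.comp_id, smul_apply,
    coe_innerSL_apply, nsmul_eq_mul, Nat.cast_ofNat, smul_eq_mul, norm_mul, norm_inv,
    Real.norm_eq_abs, one_mul]
  rw [show √(‖x‖ ^ 2 + ε ^ 2) = regNorm ε x from rfl, abs_of_pos hpos, abs_two, mul_assoc,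
    inv_mul_cancel_left₀ two_ne_zero, inv_mul_le_iff₀ hpos]
  exact hinner

end RegNorm

section CompRegNorm

variable {E F : Type*} [NormedAddCommGroup E] [NormedSpace ℝ E]
  [NormedAddCommGroup F] [InnerProductSpace ℝ F] {G g : ℝ → ℝ} {sG ε : ℝ} {u : E → F}

theorem ContDiff.comp_regNorm (hG : ContDiffOn ℝ 1 G (Ioi 0)) (hu : ContDiff ℝ 1 u)
    (hε : ε ≠ 0) : ContDiff ℝ 1 fun x => G (regNorm ε (u x)) :=
  contDiff_iff_contDiffAt.2 fun x =>
    (hG.contDiffAt (Ioi_mem_nhds (regNorm_pos hε _))).comp (f := regNorm ε ∘ u) x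
      ((contDiff_regNorm hε).comp hu).contDiffAt

theorem norm_fderiv_comp_regNorm_le (hε : ε ≠ 0) {x : E}
    (hg : HasDerivAt G (g (regNorm ε (u x))) (regNorm ε (u x))) (hu : DifferentiableAt ℝ u x) :
    ‖fderiv ℝ (fun y => G (regNorm ε (u y))) x‖ ≤ |g (regNorm ε (u x))| * ‖fderiv ℝ u x‖ := by
  have hru := ((contDiff_regNorm hε).differentiable one_ne_zero (u x)).hasFDerivAt.comp x
    hu.hasFDerivAt
  rw [show (fun y => G (regNorm ε (u y))) = G ∘ (regNorm ε ∘ u) from rfl,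
    (hg.comp_hasFDerivAt x hru).fderiv, norm_smul, Real.norm_eq_abs]
  gcongr
  calc ‖(fderiv ℝ (regNorm ε) (u x)).comp (fderiv ℝ u x)‖
      ≤ ‖fderiv ℝ (regNorm ε) (u x)‖ * ‖fderiv ℝ u x‖ := ContinuousLinearMap.opNorm_comp_le _ _
    _ ≤ ‖fderiv ℝ u x‖ :=
        mul_le_of_le_one_left (norm_nonneg _) (norm_fderiv_regNorm_le_one hε (u x))

theorem norm_fderiv_comp_regNorm_sub_le (hG : ConvexOn ℝ (Ici 0) G) (hG0 : G 0 = 0)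
    (hG_nonneg : ∀ t, 0 ≤ t → 0 ≤ G t) (hG' : ∀ t, 0 < t → HasDerivAt G (g t) t)
    (hΔ₂ : ∀ t, 0 < t → t * g t ≤ sG * G t) (hsG : 0 ≤ sG)
    (hu : ContDiff ℝ 1 u) {κ : ℝ} (hε : 0 < ε) (hκ : 1 ≤ κ) (x : E) :
    ‖fderiv ℝ (fun y => G (regNorm ε (u y)) - G ε) x‖ ≤
      sG / κ * (G (regNorm ε (u x)) - G ε) +
        (sG / κ * G ε + sG * κ ^ (sG - 1) * G ‖fderiv ℝ u x‖) := by
  have hs := regNorm_pos hε.ne' (u x)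
  rw [fderiv_sub_const]
  refine (norm_fderiv_comp_regNorm_le hε.ne' (hG' _ hs)
    ((hu.differentiable one_ne_zero) x)).trans ?_
  rw [abs_of_nonneg (hG.nonneg_of_hasDerivAt_of_map_zero hG0 hG_nonneg hs (hG' _ hs)), mul_comm]
  refine (mul_deriv_le_div_mul_add_rpow_mul hG hG0 hG_nonneg hG' hΔ₂ hsG hs (norm_nonneg _)
    hκ).trans (le_of_eq ?_)
  ring

end CompRegNorm

theorem ENNReal.le_two_mul_of_le_mul_add {a b θ : ℝ≥0∞} (ha : a ≠ ∞) (hθ : θ ≤ 2⁻¹)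
    (h : a ≤ θ * a + b) : a ≤ 2 * b := by
  have hhalf : 2⁻¹ * a + 2⁻¹ * a ≤ 2⁻¹ * a + b := by
    rw [← add_mul, ENNReal.inv_two_add_inv_two, one_mul]
    exact h.trans (by gcongr)
  have := (ENNReal.add_le_add_iff_left (ENNReal.mul_ne_top (by simp) ha)).1 hhalf
  calc a = 2 * (2⁻¹ * a) := (ENNReal.mul_inv_cancel_left two_ne_zero ENNReal.ofNat_ne_top).symm
    _ ≤ 2 * b := by gcongr

theorem ENNReal.le_of_eventually_le_add_mul {α : Type*} {l : Filter α} [l.NeBot]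
    {a b K : ℝ≥0∞} (hK : K ≠ ∞) {φ : α → ℝ≥0∞} (hφ : Tendsto φ l (𝓝 0))
    (h : ∀ᶠ x in l, a ≤ b + K * φ x) : a ≤ b :=
  ge_of_tendsto (by simpa using tendsto_const_nhds.add (ENNReal.Tendsto.const_mul hφ (Or.inr hK)))
    h

theorem integral_rpow_le_of_eLpNorm_le {α : Type*} [MeasurableSpace α] {μ : Measure α}
    {w d : α → ℝ} {p C : ℝ≥0} (hp : p ≠ 0) (hw : AEStronglyMeasurable w μ) (hw0 : ∀ x, 0 ≤ w x)
    (hd : Integrable d μ) (hd0 : ∀ x, 0 ≤ d x) (h : eLpNorm w p μ ≤ C * eLpNorm d 1 μ) :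
    ∫ x, w x ^ (p : ℝ) ∂μ ≤ C ^ (p : ℝ) * (∫ x, d x ∂μ) ^ (p : ℝ) := by
  have hd1 := memLp_one_iff_integrable.2 hd
  have hwp : MemLp w p μ :=
    ⟨hw, h.trans_lt (ENNReal.mul_lt_top ENNReal.coe_lt_top hd1.eLpNorm_lt_top)⟩
  rw [hwp.eLpNorm_eq_integral_rpow_norm (by simpa using hp) ENNReal.coe_ne_top,
    hd1.eLpNorm_eq_integral_rpow_norm one_ne_zero ENNReal.one_ne_top] at h
  simp only [ENNReal.coe_toReal, ENNReal.toReal_one, Real.rpow_one, inv_one, Real.norm_eq_abs,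
    abs_of_nonneg (hw0 _), abs_of_nonneg (hd0 _)] at h
  have hwI : 0 ≤ ∫ x, w x ^ (p : ℝ) ∂μ := integral_nonneg fun x => by have := hw0 x; positivity
  have hdI : 0 ≤ ∫ x, d x ∂μ := integral_nonneg hd0
  rw [← ENNReal.ofReal_coe_nnreal, ← ENNReal.ofReal_mul C.coe_nonneg,
    ENNReal.ofReal_le_ofReal_iff (by positivity),
    Real.rpow_inv_le_iff_of_pos hwI (by positivity) (by positivity)] at h
  rwa [Real.mul_rpow C.coe_nonneg hdI] at h

theorem eLpNorm_one_const_add_mul_le {α : Type*} [MeasurableSpace α] {μ : Measure α} {a b : ℝ}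
    (ha : 0 ≤ a) (hb : 0 ≤ b) {f : α → ℝ} (hf : AEStronglyMeasurable f μ) :
    eLpNorm (fun x => a + b * f x) 1 μ ≤
      ENNReal.ofReal a * μ univ + ENNReal.ofReal b * eLpNorm f 1 μ := by
  calc eLpNorm (fun x => a + b * f x) 1 μ
      ≤ eLpNorm (fun _ => a) 1 μ + eLpNorm (b • f) 1 μ :=
        eLpNorm_add_le aestronglyMeasurable_const (hf.const_smul b) le_rfl
    _ = _ := by
        rw [eLpNorm_const' _ one_ne_zero ENNReal.one_ne_top, eLpNorm_const_smul,
          Real.enorm_eq_ofReal ha, Real.enorm_eq_ofReal hb]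
        simp

theorem eLpNorm_le_eLpNorm_add_const {α : Type*} [MeasurableSpace α] {ν : Measure α}
    {w v : α → ℝ} {c : ℝ} (hc : 0 ≤ c) {p : ℝ≥0} (hp : 1 ≤ p) (hv : AEStronglyMeasurable v ν)
    (h : ∀ x, ‖w x‖ ≤ v x + c) :
    eLpNorm w p ν ≤ eLpNorm v p ν + ENNReal.ofReal c * ν univ ^ (p : ℝ)⁻¹ := by
  calc eLpNorm w p ν ≤ eLpNorm (fun x => v x + c) p ν := eLpNorm_mono_real h
    _ ≤ eLpNorm v p ν + eLpNorm (fun _ => c) p ν :=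
        eLpNorm_add_le hv aestronglyMeasurable_const (by exact_mod_cast hp)
    _ = _ := by
        rw [eLpNorm_const' _ (ENNReal.coe_ne_zero.2 (zero_lt_one.trans_le hp).ne') ENNReal.coe_ne_top,
          ENNReal.coe_toReal,
          one_div, Real.enorm_eq_ofReal hc]

section Sobolev

open Module

variable {E F : Type*} [NormedAddCommGroup E] [NormedSpace ℝ E] [MeasurableSpace E]
  [BorelSpace E] [FiniteDimensional ℝ E] (μ : Measure E) [μ.IsAddHaarMeasure]
  [NormedAddCommGroup F] [NormedSpace ℝ F] {p : ℝ≥0} {u : E → F}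

theorem eLpNorm_one_restrict_le_eLpNorm_fderiv (hu : ContDiff ℝ 1 u) (h2u : HasCompactSupport u)
    (hp : NNReal.HolderConjugate (finrank ℝ E) p) (Ω : Set E) :
    eLpNorm u 1 (μ.restrict Ω) ≤
      eLpNormLESNormFDerivOneConst μ p * μ Ω ^ (finrank ℝ E : ℝ)⁻¹ *
        eLpNorm (fderiv ℝ u) 1 μ := by
  have hp' := hp.coe.symm
  have hexp : 1 / (1 : ℝ≥0∞).toReal - 1 / (p : ℝ≥0∞).toReal = (finrank ℝ E : ℝ)⁻¹ := by
    simpa using hp'.one_sub_inv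
  calc eLpNorm u 1 (μ.restrict Ω)
      ≤ eLpNorm u p (μ.restrict Ω) * μ.restrict Ω univ ^ (finrank ℝ E : ℝ)⁻¹ := by
        rw [← hexp]
        exact eLpNorm_le_eLpNorm_mul_rpow_measure_univ (by exact_mod_cast hp'.lt.le)
          hu.continuous.aestronglyMeasurable
    _ ≤ eLpNorm u p μ * μ Ω ^ (finrank ℝ E : ℝ)⁻¹ := by
        rw [Measure.restrict_apply_univ]
        gcongr
        exact Measure.restrict_le_self
    _ ≤ eLpNormLESNormFDerivOneConst μ p * eLpNorm (fderiv ℝ u) 1 μ *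
          μ Ω ^ (finrank ℝ E : ℝ)⁻¹ := by
        gcongr
        exact eLpNorm_le_eLpNorm_fderiv_one μ hu h2u hp
    _ = _ := by ring

theorem eLpNorm_fderiv_le_two_mul_of_norm_fderiv_le (hu : ContDiff ℝ 1 u)
    (h2u : HasCompactSupport u) (hp : NNReal.HolderConjugate (finrank ℝ E) p) {Ω : Set E}
    (hΩ : tsupport u ⊆ Ω) {a : ℝ≥0}
    (ha : a * (eLpNormLESNormFDerivOneConst μ p * μ Ω ^ (finrank ℝ E : ℝ)⁻¹) ≤ 2⁻¹)
    {h : E → ℝ} (hh : AEStronglyMeasurable h (μ.restrict Ω))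
    (hbound : ∀ x, ‖fderiv ℝ u x‖ ≤ a * ‖u x‖ + h x) :
    eLpNorm (fderiv ℝ u) 1 μ ≤ 2 * eLpNorm h 1 (μ.restrict Ω) := by
  have hDu := (hu.continuous_fderiv one_ne_zero).memLp_of_hasCompactSupport (μ := μ) (p := 1)
    (h2u.fderiv ℝ)
  refine ENNReal.le_two_mul_of_le_mul_add hDu.eLpNorm_ne_top ha ?_
  have hsupp : Function.support (fderiv ℝ u) ⊆ Ω := (support_fderiv_subset ℝ (f := u)).trans hΩ
  calc eLpNorm (fderiv ℝ u) 1 μ = eLpNorm (fderiv ℝ u) 1 (μ.restrict Ω) :=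
        (eLpNorm_restrict_eq_of_support_subset (ε := E →L[ℝ] F) hsupp).symm
    _ ≤ eLpNorm (fun x => (a : ℝ) * ‖u x‖ + h x) 1 (μ.restrict Ω) := eLpNorm_mono_real hbound
    _ ≤ eLpNorm (fun x => (a : ℝ) * ‖u x‖) 1 (μ.restrict Ω) + eLpNorm h 1 (μ.restrict Ω) :=
        eLpNorm_add_le (by have := hu.continuous; fun_prop) hh le_rfl
    _ = a * eLpNorm u 1 (μ.restrict Ω) + eLpNorm h 1 (μ.restrict Ω) := by
        rw [show (fun x => (a : ℝ) * ‖u x‖) = (a : ℝ) • fun x => ‖u x‖ from rfl,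
          eLpNorm_const_smul, eLpNorm_norm]
        simp
    _ ≤ a * (eLpNormLESNormFDerivOneConst μ p * μ Ω ^ (finrank ℝ E : ℝ)⁻¹ *
          eLpNorm (fderiv ℝ u) 1 μ) + eLpNorm h 1 (μ.restrict Ω) := by
        gcongr
        exact eLpNorm_one_restrict_le_eLpNorm_fderiv μ hu h2u hp Ω
    _ = _ := by ring

end Sobolev

section OrliczPoincare

open Module

variable {E F : Type*} [NormedAddCommGroup E] [NormedSpace ℝ E] [MeasurableSpace E]
  [BorelSpace E] [FiniteDimensional ℝ E] (μ : Measure E) [μ.IsAddHaarMeasure]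
  [NormedAddCommGroup F] [InnerProductSpace ℝ F] {p : ℝ≥0} {u : E → F}
  {G g : ℝ → ℝ} {sG : ℝ}

theorem eLpNorm_fderiv_comp_regNorm_sub_le (hG : ConvexOn ℝ (Ici 0) G) (hG0 : G 0 = 0)
    (hG_nonneg : ∀ t, 0 ≤ t → 0 ≤ G t) (hG' : ∀ t, 0 < t → HasDerivAt G (g t) t)
    (hΔ₂ : ∀ t, 0 < t → t * g t ≤ sG * G t) (hsG : 0 ≤ sG)
    (hu : ContDiff ℝ 1 u) (h2u : HasCompactSupport u)
    (hp : NNReal.HolderConjugate (finrank ℝ E) p) {Ω : Set E} (hΩ : tsupport u ⊆ Ω)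
    {κ : ℝ} (hκ : 1 ≤ κ)
    (hκP : (sG / κ).toNNReal * (eLpNormLESNormFDerivOneConst μ p * μ Ω ^ (finrank ℝ E : ℝ)⁻¹)
      ≤ 2⁻¹)
    {ε : ℝ} (hε : 0 < ε) :
    eLpNorm (fderiv ℝ fun x => G (regNorm ε (u x)) - G ε) 1 μ ≤
      2 * (ENNReal.ofReal (sG / κ) * ENNReal.ofReal (G ε) * μ Ω +
        ENNReal.ofReal (sG * κ ^ (sG - 1)) *
          eLpNorm (fun x => G ‖fderiv ℝ u x‖) 1 (μ.restrict Ω)) := by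
  have hGmono := hG.monotoneOn_of_map_zero hG0 hG_nonneg
  have hv := (hu.comp_regNorm (hG.contDiffOn_Ioi_of_hasDerivAt hG') hε.ne').sub
    (contDiff_const (c := G ε))
  have hvu := tsupport_comp_regNorm_sub_subset G u hε.le
  have hd : Continuous fun x => G ‖fderiv ℝ u x‖ :=
    (hG.continuousOn_Ici (hG.continuousWithinAt_zero_of_map_zero hG0 hG_nonneg)).comp_continuous
      (hu.continuous_fderiv one_ne_zero).norm fun x => norm_nonneg _
  have hDv := eLpNorm_fderiv_le_two_mul_of_norm_fderiv_le μ hv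
    (h2u.mono' ((subset_tsupport _).trans hvu)) hp (hvu.trans hΩ) hκP
    (h := fun x => sG / κ * G ε + sG * κ ^ (sG - 1) * G ‖fderiv ℝ u x‖)
    (continuous_const.add (continuous_const.mul hd)).aestronglyMeasurable fun x => by
      have hεs : ε ≤ regNorm ε (u x) := (le_abs_self ε).trans (abs_le_regNorm ε (u x))
      rw [Real.coe_toNNReal _ (by positivity),
        Real.norm_of_nonneg (sub_nonneg.2 (hGmono hε.le (hε.le.trans hεs) hεs))]
      exact norm_fderiv_comp_regNorm_sub_le hG hG0 hG_nonneg hG' hΔ₂ hsG hu hε hκ x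
  have hh := eLpNorm_one_const_add_mul_le (μ := μ.restrict Ω) (a := sG / κ * G ε)
    (b := sG * κ ^ (sG - 1)) (by have := hG_nonneg ε hε.le; positivity) (by positivity)
    hd.aestronglyMeasurable
  rw [Measure.restrict_apply_univ, ENNReal.ofReal_mul (by positivity)] at hh
  exact hDv.trans (mul_le_mul_right hh 2)

theorem eLpNorm_comp_norm_le_add (hG : ConvexOn ℝ (Ici 0) G) (hG0 : G 0 = 0)
    (hG_nonneg : ∀ t, 0 ≤ t → 0 ≤ G t) (hG' : ∀ t, 0 < t → HasDerivAt G (g t) t)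
    (hΔ₂ : ∀ t, 0 < t → t * g t ≤ sG * G t) (hsG : 0 ≤ sG)
    (hu : ContDiff ℝ 1 u) (h2u : HasCompactSupport u)
    (hp : NNReal.HolderConjugate (finrank ℝ E) p) {Ω : Set E} (hΩ : tsupport u ⊆ Ω)
    {κ : ℝ} (hκ : 1 ≤ κ)
    (hκP : (sG / κ).toNNReal * (eLpNormLESNormFDerivOneConst μ p * μ Ω ^ (finrank ℝ E : ℝ)⁻¹)
      ≤ 2⁻¹)
    {ε : ℝ} (hε : 0 < ε) :
    eLpNorm (fun x => G ‖u x‖) p (μ.restrict Ω) ≤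
      2 * eLpNormLESNormFDerivOneConst μ p * ENNReal.ofReal (sG * κ ^ (sG - 1)) *
          eLpNorm (fun x => G ‖fderiv ℝ u x‖) 1 (μ.restrict Ω) +
        (2 * eLpNormLESNormFDerivOneConst μ p * ENNReal.ofReal (sG / κ) * μ Ω +
          μ Ω ^ (p : ℝ)⁻¹) * ENNReal.ofReal (G ε) := by
  have hGmono := hG.monotoneOn_of_map_zero hG0 hG_nonneg
  have hv := (hu.comp_regNorm (hG.contDiffOn_Ioi_of_hasDerivAt hG') hε.ne').sub
    (contDiff_const (c := G ε))
  have hw := eLpNorm_le_eLpNorm_add_const (ν := μ.restrict Ω) (w := fun x => G ‖u x‖)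
    (hG_nonneg ε hε.le) hp.coe.symm.lt.le hv.continuous.aestronglyMeasurable fun x => by
      rw [Real.norm_of_nonneg (hG_nonneg _ (norm_nonneg _)), sub_add_cancel]
      exact hGmono (norm_nonneg _) (norm_nonneg _ |>.trans (norm_le_regNorm ε (u x)))
        (norm_le_regNorm ε (u x))
  have hGNS := eLpNorm_le_eLpNorm_fderiv_one μ hv
    (h2u.mono' ((subset_tsupport _).trans (tsupport_comp_regNorm_sub_subset G u hε.le))) hp
  rw [Measure.restrict_apply_univ] at hw
  calc eLpNorm (fun x => G ‖u x‖) p (μ.restrict Ω)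
      ≤ eLpNorm (fun x => G (regNorm ε (u x)) - G ε) p μ +
          ENNReal.ofReal (G ε) * μ Ω ^ (p : ℝ)⁻¹ :=
        hw.trans (by gcongr; exact Measure.restrict_le_self)
    _ ≤ eLpNormLESNormFDerivOneConst μ p * (2 * (ENNReal.ofReal (sG / κ) *
          ENNReal.ofReal (G ε) * μ Ω + ENNReal.ofReal (sG * κ ^ (sG - 1)) *
            eLpNorm (fun x => G ‖fderiv ℝ u x‖) 1 (μ.restrict Ω))) +
          ENNReal.ofReal (G ε) * μ Ω ^ (p : ℝ)⁻¹ := by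
        gcongr
        exact hGNS.trans (mul_le_mul_right (eLpNorm_fderiv_comp_regNorm_sub_le μ hG hG0
          hG_nonneg hG' hΔ₂ hsG hu h2u hp hΩ hκ hκP hε) _)
    _ = _ := by ring

theorem exists_eLpNorm_comp_norm_le (hG : ConvexOn ℝ (Ici 0) G) (hG0 : G 0 = 0)
    (hG_nonneg : ∀ t, 0 ≤ t → 0 ≤ G t) (hG' : ∀ t, 0 < t → HasDerivAt G (g t) t)
    (hΔ₂ : ∀ t, 0 < t → t * g t ≤ sG * G t) (hsG : 0 ≤ sG)
    (hp : NNReal.HolderConjugate (finrank ℝ E) p) {Ω : Set E} (hΩ : μ Ω ≠ ∞) :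
    ∃ C : ℝ≥0, ∀ u : E → F, ContDiff ℝ 1 u → HasCompactSupport u → tsupport u ⊆ Ω →
      eLpNorm (fun x => G ‖u x‖) p (μ.restrict Ω) ≤
        C * eLpNorm (fun x => G ‖fderiv ℝ u x‖) 1 (μ.restrict Ω) := by
  set c := eLpNormLESNormFDerivOneConst μ p
  have hPfin : (c : ℝ≥0∞) * μ Ω ^ (finrank ℝ E : ℝ)⁻¹ ≠ ∞ :=
    ENNReal.mul_ne_top ENNReal.coe_ne_top (ENNReal.rpow_ne_top_of_nonneg (by positivity) hΩ)
  set P := ((c : ℝ≥0∞) * μ Ω ^ (finrank ℝ E : ℝ)⁻¹).toReal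
  -- `κ` brings `s_G / κ` times the `L¹` Poincaré constant down to `1/2`, so that the `v`-term
  -- can be absorbed.
  set κ := 1 + 2 * sG * P
  have hκ : 1 ≤ κ := le_add_of_nonneg_right (by positivity)
  have hκP : (sG / κ).toNNReal * ((c : ℝ≥0∞) * μ Ω ^ (finrank ℝ E : ℝ)⁻¹) ≤ 2⁻¹ := by
    change ENNReal.ofReal (sG / κ) * _ ≤ _
    rw [← ENNReal.ofReal_toReal hPfin, ← ENNReal.ofReal_mul (by positivity),
      ← ENNReal.ofReal_ofNat 2, ← ENNReal.ofReal_inv_of_pos two_pos]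
    refine ENNReal.ofReal_le_ofReal ?_
    rw [div_mul_eq_mul_div, div_le_iff₀ (by positivity)]
    linarith
  refine ⟨2 * c * (sG * κ ^ (sG - 1)).toNNReal, fun u hu h2u hΩu => ?_⟩
  have hK : 2 * (c : ℝ≥0∞) * ENNReal.ofReal (sG / κ) * μ Ω + μ Ω ^ (p : ℝ)⁻¹ ≠ ∞ :=
    ENNReal.add_ne_top.2 ⟨ENNReal.mul_ne_top (by simp [ENNReal.mul_ne_top]) hΩ,
      ENNReal.rpow_ne_top_of_nonneg (by positivity) hΩ⟩
  have hGε : Tendsto (fun ε => ENNReal.ofReal (G ε)) (𝓝[>] 0) (𝓝 0) := by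
    have := (hG.continuousWithinAt_zero_of_map_zero hG0 hG_nonneg).tendsto.mono_left
      (nhdsWithin_mono 0 Ioi_subset_Ici_self)
    simpa [hG0] using ENNReal.tendsto_ofReal this
  refine ENNReal.le_of_eventually_le_add_mul hK hGε ?_
  filter_upwards [self_mem_nhdsWithin] with ε hε
  simpa [ENNReal.ofReal] using
    eLpNorm_comp_norm_le_add μ hG hG0 hG_nonneg hG' hΔ₂ hsG hu h2u hp hΩu hκ hκP hε

theorem exists_integral_comp_norm_rpow_le (hG : ConvexOn ℝ (Ici 0) G) (hG0 : G 0 = 0)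
    (hG_nonneg : ∀ t, 0 ≤ t → 0 ≤ G t) (hG' : ∀ t, 0 < t → HasDerivAt G (g t) t)
    (hΔ₂ : ∀ t, 0 < t → t * g t ≤ sG * G t) (hsG : 0 ≤ sG)
    (hp : NNReal.HolderConjugate (finrank ℝ E) p) {Ω : Set E} (hΩ : μ Ω ≠ ∞) :
    ∃ C : ℝ, 0 < C ∧ ∀ u : E → F, ContDiff ℝ 1 u → HasCompactSupport u → tsupport u ⊆ Ω →
      ∫ x in Ω, G ‖u x‖ ^ (p : ℝ) ∂μ ≤ C * (∫ x in Ω, G ‖fderiv ℝ u x‖ ∂μ) ^ (p : ℝ) := by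
  obtain ⟨C, hC⟩ := exists_eLpNorm_comp_norm_le (F := F) μ hG hG0 hG_nonneg hG' hΔ₂ hsG hp hΩ
  refine ⟨C ^ (p : ℝ) + 1, by positivity, fun u hu h2u hΩu => ?_⟩
  have hGc : ContinuousOn G (Ici 0) :=
    hG.continuousOn_Ici (hG.continuousWithinAt_zero_of_map_zero hG0 hG_nonneg)
  have hd : Continuous fun x => G ‖fderiv ℝ u x‖ :=
    hGc.comp_continuous (hu.continuous_fderiv one_ne_zero).norm fun x => norm_nonneg _
  have hd_supp : HasCompactSupport fun x => G ‖fderiv ℝ u x‖ :=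
    (h2u.fderiv ℝ).comp_left (g := fun L => G ‖L‖) (by simp [hG0])
  have hd0 : 0 ≤ ∫ x in Ω, G ‖fderiv ℝ u x‖ ∂μ :=
    integral_nonneg fun x => hG_nonneg _ (norm_nonneg _)
  calc ∫ x in Ω, G ‖u x‖ ^ (p : ℝ) ∂μ
      ≤ C ^ (p : ℝ) * (∫ x in Ω, G ‖fderiv ℝ u x‖ ∂μ) ^ (p : ℝ) :=
        integral_rpow_le_of_eLpNorm_le hp.symm.pos.ne'
          (hGc.comp_continuous hu.continuous.norm fun x => norm_nonneg _).aestronglyMeasurable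
          (fun x => hG_nonneg _ (norm_nonneg _))
          (hd.integrable_of_hasCompactSupport hd_supp).integrableOn
          (fun x => hG_nonneg _ (norm_nonneg _)) (hC u hu h2u hΩu)
    _ ≤ (C ^ (p : ℝ) + 1) * (∫ x in Ω, G ‖fderiv ℝ u x‖ ∂μ) ^ (p : ℝ) := by
        gcongr
        exact le_add_of_nonneg_right zero_le_one

end OrliczPoincare

/-- `W₀^{1,G}(Ω)` is represented by its dense subspace of `C¹` maps with compact support in `Ω`. -/
theorem orlicz_sobolev_poincare_general
    {n m : ℕ} (hn : 2 ≤ n)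
    (Ω : Set (EuclideanSpace ℝ (Fin n)))
    (hΩbdd : Bornology.IsBounded Ω)
    (G g : ℝ → ℝ) (iG sG : ℝ)
    (hconv : ConvexOn ℝ (Set.Ici 0) G) (hG0 : G 0 = 0)
    (hG' : ∀ t, 0 < t → HasDerivAt G (g t) t)
    (hGpos : ∀ t, 0 < t → 0 < G t)
    (hbd : ∀ t, 0 < t → iG * G t ≤ t * g t ∧ t * g t ≤ sG * G t) :
    ∃ C : ℝ, 0 < C ∧
      ∀ u : EuclideanSpace ℝ (Fin n) → EuclideanSpace ℝ (Fin m),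
        ContDiff ℝ 1 u → HasCompactSupport u → tsupport u ⊆ Ω →
        ∫ x in Ω, G ‖u x‖ ^ ((n : ℝ) / (n - 1)) ≤
          C * (∫ x in Ω, G ‖fderiv ℝ u x‖) ^ ((n : ℝ) / (n - 1)) := by
  have hn1 : (1 : ℝ) < n := by exact_mod_cast hn
  have hp_coe : (((n : ℝ) / (n - 1)).toNNReal : ℝ) = n / (n - 1) :=
    Real.coe_toNNReal _ (by bound)
  have hp : NNReal.HolderConjugate (Module.finrank ℝ (EuclideanSpace ℝ (Fin n)))
      ((n : ℝ) / (n - 1)).toNNReal := by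
    rw [finrank_euclideanSpace_fin, ← NNReal.holderConjugate_coe_iff, hp_coe, NNReal.coe_natCast]
    exact Real.HolderConjugate.conjExponent hn1
  have hG_nonneg : ∀ t, 0 ≤ t → 0 ≤ G t := fun t ht =>
    ht.eq_or_lt.elim (fun h => h ▸ hG0.ge) fun h => (hGpos t h).le
  have hsG : 0 ≤ sG := by
    have := hconv.nonneg_of_hasDerivAt_of_map_zero hG0 hG_nonneg one_pos (hG' 1 one_pos)
    nlinarith [(hbd 1 one_pos).2, hGpos 1 one_pos]
  simpa only [hp_coe] using exists_integral_comp_norm_rpow_le (F := EuclideanSpace ℝ (Fin m))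
    volume hconv hG0 hG_nonneg hG' (fun t ht => (hbd t ht).2) hsG hp hΩbdd.measure_lt_top.ne

/-- Orlicz Sobolev–Poincaré inequality: for G an N-function in Δ₂ ∩ ∇₂ on a
bounded Lipschitz-type domain Ω, every u ∈ W₀^{1,G}(Ω,ℝ^m) (stated here for
smooth compactly supported maps, which are dense) satisfies
∫ G(|u|)^{n'} ≤ C (∫ G(|Du|))^{n'} with n' = n/(n−1). -/
theorem orlicz_sobolev_poincare
    {n m : ℕ} (hn : 2 ≤ n)
    (Ω : Set (EuclideanSpace ℝ (Fin n))) (hΩopen : IsOpen Ω)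
    (hΩbdd : Bornology.IsBounded Ω)
    (G g : ℝ → ℝ) (iG sG : ℝ)
    (hconv : ConvexOn ℝ (Set.Ici 0) G) (hG0 : G 0 = 0)
    (hG' : ∀ t, 0 < t → HasDerivAt G (g t) t)
    (hGpos : ∀ t, 0 < t → 0 < G t)
    (h1 : 1 < iG) (hle : iG ≤ sG)
    (hbd : ∀ t, 0 < t → iG * G t ≤ t * g t ∧ t * g t ≤ sG * G t) :
    ∃ C : ℝ, 0 < C ∧
      ∀ u : EuclideanSpace ℝ (Fin n) → EuclideanSpace ℝ (Fin m),
        ContDiff ℝ 1 u → HasCompactSupport u → tsupport u ⊆ Ω →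
        ∫ x in Ω, G ‖u x‖ ^ ((n : ℝ) / (n - 1)) ≤
          C * (∫ x in Ω, G ‖fderiv ℝ u x‖) ^ ((n : ℝ) / (n - 1)) :=
  orlicz_sobolev_poincare_general hn Ω hΩbdd G g iG sG hconv hG0 hG' hGpos hbd
end

section
/- Let G be an N-function with inverse G^{-1} and indices 1 < i_G ≤ s_G < ∞, and fix κ ∈ [1, i_G). Define h_κ^{-1}(t) = ∫_0^t [G^{-1}(τ)]^{-κ} dτ. Then −1 < −κ/i_G ≤ t (h_κ^{-1})''(t)/(h_κ^{-1})'(t) = −κ t (G^{-1})'(t)/G^{-1}(t) ≤ −κ/s_G < 0; in particular h_κ^{-1} is increasing and concave on [0,∞), and h_κ(G(t)/t^κ) ≈ G(t) with constants depending only on i_G, s_G, κ. -/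
/-!
Writing `s = G⁻¹(t)`, the chain rule gives `t (G⁻¹)'(t) / G⁻¹(t) = G(s) / (s g(s))`, which lies in
`[1/s_G, 1/i_G]` by the definition of the indices. The upper bound `1/i_G` makes
`τ ↦ G⁻¹(τ)^{-κ} τ^{κ/i_G}` nondecreasing, so with `p = κ/i_G < 1` the integrand `F = (G⁻¹)^{-κ}`
of `h_κ^{-1}` is dominated on `(0, x]` by `F(x) x^p τ^{-p}`, which is integrable. Thus `h_κ^{-1}`
is a primitive of a positive nonincreasing function, hence increasing and concave, and
`T F(T) ≤ h_κ^{-1}(T)`, `h_κ^{-1}(cT) ≤ c^{1-p} T F(T) / (1-p)`. For `T = G(t)` we have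
`T F(T) = G(t)/t^κ`; taking `c^{1-p} = 1-p`, the intermediate value theorem puts
`h_κ(G(t)/t^κ)` in `[c G(t), G(t)]`.
-/

open MeasureTheory Set

theorem monotoneOn_mul_rpow_of_hasDerivAt {F F' : ℝ → ℝ} {a : ℝ}
    (hF : ∀ t, 0 < t → HasDerivAt F (F' t) t) (h : ∀ t, 0 < t → 0 ≤ t * F' t + a * F t) :
    MonotoneOn (fun t => F t * t ^ a) (Ioi 0) := by
  have hderiv : ∀ t, 0 < t →
      HasDerivAt (fun t => F t * t ^ a) (t ^ a / t * (t * F' t + a * F t)) t := by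
    intro t ht
    refine ((hF t ht).mul (Real.hasDerivAt_rpow_const (p := a) (Or.inl ht.ne'))).congr_deriv ?_
    rw [Real.rpow_sub_one ht.ne']
    field_simp
  refine monotoneOn_of_hasDerivWithinAt_nonneg
    (f' := fun t => t ^ a / t * (t * F' t + a * F t)) (convex_Ioi 0)
    (fun t ht => (hderiv t ht).continuousAt.continuousWithinAt) ?_ ?_ <;> rw [interior_Ioi]
  · exact fun t ht => (hderiv t ht).hasDerivWithinAt
  · exact fun t ht => mul_nonneg (div_nonneg (Real.rpow_nonneg ht.le _) ht.le) (h t ht)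

theorem mem_Icc_of_leftInverse {H K : ℝ → ℝ} (hK : ∀ u, 0 ≤ u → K (H u) = u)
    (hH : ContinuousOn H (Ici 0)) {a b s : ℝ} (ha : 0 ≤ a) (hab : a ≤ b)
    (hs : s ∈ Icc (H a) (H b)) :
    K s ∈ Icc a b := by
  obtain ⟨u, hu, rfl⟩ := intermediate_value_Icc hab (hH.mono fun u hu => ha.trans hu.1) hs
  rwa [hK u (ha.trans hu.1)]

section Primitive

variable {F : ℝ → ℝ} {p : ℝ}

theorem le_mul_rpow_of_monotoneOn_mul_rpow (hmono : MonotoneOn (fun t => F t * t ^ p) (Ioi 0))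
    {τ x : ℝ} (hτ : 0 < τ) (hτx : τ ≤ x) : F τ ≤ F x * x ^ p * τ ^ (-p) := by
  rw [Real.rpow_neg hτ.le, ← div_eq_mul_inv, le_div_iff₀ (Real.rpow_pos_of_pos hτ p)]
  exact hmono hτ (hτ.trans_le hτx) hτx

theorem intervalIntegrable_of_monotoneOn_mul_rpow (hcont : ContinuousOn F (Ioi 0))
    (hF : ∀ t, 0 < t → 0 ≤ F t) (hmono : MonotoneOn (fun t => F t * t ^ p) (Ioi 0)) (hp : p < 1)
    {x : ℝ} (hx : 0 < x) : IntervalIntegrable F volume 0 x := by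
  have hbound : IntervalIntegrable (fun τ => F x * x ^ p * τ ^ (-p)) volume 0 x :=
    (intervalIntegral.intervalIntegrable_rpow' (by linarith)).const_mul _
  rw [intervalIntegrable_iff_integrableOn_Ioc_of_le hx.le] at hbound ⊢
  refine hbound.mono' ((hcont.mono Ioc_subset_Ioi_self).aestronglyMeasurable measurableSet_Ioc)
    ((ae_restrict_iff' measurableSet_Ioc).2 (Filter.Eventually.of_forall fun τ hτ => ?_))
  rw [Real.norm_of_nonneg (hF τ hτ.1)]
  exact le_mul_rpow_of_monotoneOn_mul_rpow hmono hτ.1 hτ.2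

theorem integral_le_of_monotoneOn_mul_rpow (hmono : MonotoneOn (fun t => F t * t ^ p) (Ioi 0))
    (hp : p < 1) {τ x : ℝ} (hint : IntervalIntegrable F volume 0 τ) (hτ : 0 < τ) (hτx : τ ≤ x) :
    ∫ u in (0 : ℝ)..τ, F u ≤ (τ / x) ^ (1 - p) / (1 - p) * (x * F x) := by
  have hx : 0 < x := hτ.trans_le hτx
  calc ∫ u in (0 : ℝ)..τ, F u ≤ ∫ u in (0 : ℝ)..τ, F x * x ^ p * u ^ (-p) :=
        intervalIntegral.integral_mono_on_of_le_Ioo hτ.le hint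
          ((intervalIntegral.intervalIntegrable_rpow' (by linarith)).const_mul _)
          fun u hu => le_mul_rpow_of_monotoneOn_mul_rpow hmono hu.1 (hu.2.le.trans hτx)
    _ = (τ / x) ^ (1 - p) / (1 - p) * (x * F x) := by
        have h1p : 1 - p ≠ 0 := by linarith
        rw [intervalIntegral.integral_const_mul, integral_rpow (Or.inl (by linarith)),
          neg_add_eq_sub, Real.zero_rpow h1p, Real.div_rpow hτ.le hx.le, Real.rpow_sub hx,
          Real.rpow_one]
        field_simp
        ring

theorem mul_le_integral_of_antitoneOn (hanti : AntitoneOn F (Ioi 0)) {x : ℝ}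
    (hint : IntervalIntegrable F volume 0 x) (hx : 0 < x) : x * F x ≤ ∫ u in (0 : ℝ)..x, F u := by
  have := intervalIntegral.integral_mono_on_of_le_Ioo hx.le intervalIntegrable_const hint
    fun u hu => hanti hu.1 hx hu.2.le
  rwa [intervalIntegral.integral_const, sub_zero, smul_eq_mul] at this

theorem hasDerivAt_primitive (hcont : ContinuousOn F (Ioi 0)) {x : ℝ}
    (hint : IntervalIntegrable F volume 0 x) (hx : 0 < x) :
    HasDerivAt (fun u => ∫ τ in (0 : ℝ)..u, F τ) (F x) x :=
  intervalIntegral.integral_hasDerivAt_right hint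
    (hcont.stronglyMeasurableAtFilter isOpen_Ioi x hx) (hcont.continuousAt (Ioi_mem_nhds hx))

theorem continuousOn_primitive_Ici (hint : ∀ x, 0 < x → IntervalIntegrable F volume 0 x) :
    ContinuousOn (fun u => ∫ τ in (0 : ℝ)..u, F τ) (Ici 0) := by
  intro x hx
  have hx1 : 0 < x + 1 := by linarith [mem_Ici.1 hx]
  refine (intervalIntegral.continuousWithinAt_primitive (b₁ := 0) (b₂ := x + 1)
    Real.volume_singleton (by simpa [hx1.le] using hint _ hx1)).mono_of_mem_nhdsWithin ?_
  exact Filter.mem_of_superset (inter_mem_nhdsWithin _ (Iio_mem_nhds (lt_add_one x)))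
    fun y hy => ⟨hy.1, hy.2.le⟩

theorem strictMonoOn_primitive (hcont : ContinuousOn F (Ioi 0))
    (hint : ∀ x, 0 < x → IntervalIntegrable F volume 0 x) (hF : ∀ t, 0 < t → 0 < F t) :
    StrictMonoOn (fun u => ∫ τ in (0 : ℝ)..u, F τ) (Ici 0) := by
  refine strictMonoOn_of_hasDerivWithinAt_pos (f' := F) (convex_Ici 0)
    (continuousOn_primitive_Ici hint) ?_ ?_ <;> rw [interior_Ici]
  · exact fun x hx => (hasDerivAt_primitive hcont (hint x hx) hx).hasDerivWithinAt
  · exact hF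

theorem concaveOn_primitive (hcont : ContinuousOn F (Ioi 0))
    (hint : ∀ x, 0 < x → IntervalIntegrable F volume 0 x) (hanti : AntitoneOn F (Ioi 0)) :
    ConcaveOn ℝ (Ici 0) (fun u => ∫ τ in (0 : ℝ)..u, F τ) := by
  refine AntitoneOn.concaveOn_of_deriv (convex_Ici 0) (continuousOn_primitive_Ici hint) ?_ ?_ <;>
    rw [interior_Ici]
  · exact fun x hx =>
      (hasDerivAt_primitive hcont (hint x hx) hx).differentiableAt.differentiableWithinAt
  · exact hanti.congr fun x hx => ((hasDerivAt_primitive hcont (hint x hx) hx).deriv).symm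

theorem mem_Icc_of_leftInverse_primitive {K : ℝ → ℝ}
    (hK : ∀ u, 0 ≤ u → K (∫ τ in (0 : ℝ)..u, F τ) = u)
    (hint : ∀ x, 0 < x → IntervalIntegrable F volume 0 x) (hanti : AntitoneOn F (Ioi 0))
    (hmono : MonotoneOn (fun t => F t * t ^ p) (Ioi 0)) (hp₀ : 0 ≤ p) (hp : p < 1)
    {T : ℝ} (hT : 0 < T) : K (T * F T) ∈ Icc ((1 - p) ^ (1 - p)⁻¹ * T) T := by
  set c := (1 - p) ^ (1 - p)⁻¹
  have hc : 0 < c := Real.rpow_pos_of_pos (by linarith) _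
  have hc₁ : c ≤ 1 := Real.rpow_le_one (by linarith) (by linarith) (inv_nonneg.2 (by linarith))
  have hcp : c ^ (1 - p) = 1 - p := by
    rw [← Real.rpow_mul (by linarith), inv_mul_cancel₀ (by linarith), Real.rpow_one]
  have hcT : 0 < c * T := mul_pos hc hT
  refine mem_Icc_of_leftInverse hK (continuousOn_primitive_Ici hint) hcT.le
    (mul_le_of_le_one_left hT.le hc₁) ⟨?_, mul_le_integral_of_antitoneOn hanti (hint T hT) hT⟩
  calc ∫ τ in (0 : ℝ)..c * T, F τ ≤ (c * T / T) ^ (1 - p) / (1 - p) * (T * F T) :=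
        integral_le_of_monotoneOn_mul_rpow hmono hp (hint _ hcT) hcT
          (mul_le_of_le_one_left hT.le hc₁)
    _ = T * F T := by rw [mul_div_cancel_right₀ _ hT.ne', hcp, div_self (by linarith), one_mul]

end Primitive

section RightInverse

variable {G g Ginv Ginv' : ℝ → ℝ}

theorem pos_of_rightInverse (hGpos : ∀ t, 0 < t → 0 < G t)
    (hGGinv : ∀ t, 0 ≤ t → G (Ginv t) = t) (hGinv_nonneg : ∀ t, 0 ≤ t → 0 ≤ Ginv t)
    {t : ℝ} (ht : 0 < t) : 0 < Ginv t := by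
  have hG0 : G 0 = 0 := by
    rcases (hGinv_nonneg 0 le_rfl).eq_or_lt with h | h
    · have h0 := hGGinv 0 le_rfl
      rwa [← h] at h0
    · exact absurd (hGGinv 0 le_rfl) (hGpos _ h).ne'
  refine (hGinv_nonneg t ht.le).lt_of_ne fun h => ht.ne' ?_
  rw [← hGGinv t ht.le, ← h, hG0]

theorem deriv_rightInverse_eq_inv (hG' : ∀ t, 0 < t → HasDerivAt G (g t) t)
    (hgpos : ∀ t, 0 < t → 0 < g t) (hGGinv : ∀ t, 0 ≤ t → G (Ginv t) = t) {t : ℝ}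
    (hGinv' : HasDerivAt Ginv (Ginv' t) t) (ht : 0 < t) (hs : 0 < Ginv t) :
    Ginv' t = (g (Ginv t))⁻¹ := by
  refine hGinv'.unique ((hG' _ hs).of_local_left_inverse hGinv'.continuousAt (hgpos _ hs).ne' ?_)
  filter_upwards [Ioi_mem_nhds ht] with τ hτ using hGGinv τ (le_of_lt hτ)

theorem strictMonoOn_rightInverse (hG' : ∀ t, 0 < t → HasDerivAt G (g t) t)
    (hgpos : ∀ t, 0 < t → 0 < g t) (hGGinv : ∀ t, 0 ≤ t → G (Ginv t) = t)
    (hGinv' : ∀ t, 0 < t → HasDerivAt Ginv (Ginv' t) t) (hpos : ∀ t, 0 < t → 0 < Ginv t) :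
    StrictMonoOn Ginv (Ioi 0) := by
  refine strictMonoOn_of_hasDerivWithinAt_pos (f' := Ginv') (convex_Ioi 0)
    (fun t ht => (hGinv' t ht).continuousAt.continuousWithinAt) ?_ ?_ <;> rw [interior_Ioi]
  · exact fun t ht => (hGinv' t ht).hasDerivWithinAt
  · intro t ht
    rw [deriv_rightInverse_eq_inv hG' hgpos hGGinv (hGinv' t ht) ht (hpos t ht)]
    exact inv_pos.2 (hgpos _ (hpos t ht))

theorem index_bounds_rightInverse {iG sG : ℝ} (hG' : ∀ t, 0 < t → HasDerivAt G (g t) t)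
    (hgpos : ∀ t, 0 < t → 0 < g t)
    (hbd : ∀ t, 0 < t → iG * G t ≤ t * g t ∧ t * g t ≤ sG * G t)
    (hGGinv : ∀ t, 0 ≤ t → G (Ginv t) = t) (hGinv' : ∀ t, 0 < t → HasDerivAt Ginv (Ginv' t) t)
    (hpos : ∀ t, 0 < t → 0 < Ginv t) {t : ℝ} (ht : 0 < t) :
    iG * (t * Ginv' t) ≤ Ginv t ∧ Ginv t ≤ sG * (t * Ginv' t) := by
  have hs := hpos t ht
  obtain ⟨hlo, hhi⟩ := hbd _ hs
  rw [hGGinv t ht.le] at hlo hhi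
  rw [deriv_rightInverse_eq_inv hG' hgpos hGGinv (hGinv' t ht) ht hs, ← mul_assoc, ← mul_assoc,
    mul_inv_le_iff₀ (hgpos _ hs), le_mul_inv_iff₀ (hgpos _ hs)]
  exact ⟨hlo, hhi⟩

end RightInverse

theorem monotoneOn_rpow_neg_mul_rpow_of_index_le {f f' : ℝ → ℝ} {i κ : ℝ} (hi : 0 < i)
    (hκ : 0 ≤ κ) (hf : ∀ t, 0 < t → HasDerivAt f (f' t) t) (hpos : ∀ t, 0 < t → 0 < f t)
    (hidx : ∀ t, 0 < t → i * (t * f' t) ≤ f t) :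
    MonotoneOn (fun t => f t ^ (-κ) * t ^ (κ / i)) (Ioi 0) := by
  refine monotoneOn_mul_rpow_of_hasDerivAt
    (fun t ht => (hf t ht).rpow_const (Or.inl (hpos t ht).ne')) fun t ht => ?_
  have hsplit : f t ^ (-κ) = f t ^ (-κ - 1) * f t := by
    rw [Real.rpow_sub_one (hpos t ht).ne', div_mul_cancel₀ _ (hpos t ht).ne']
  have hfactor : t * (f' t * -κ * f t ^ (-κ - 1)) + κ / i * f t ^ (-κ) =
      κ / i * f t ^ (-κ - 1) * (f t - i * (t * f' t)) := by
    rw [hsplit]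
    field_simp
    ring
  rw [hfactor]
  exact mul_nonneg (mul_nonneg (div_nonneg hκ hi.le) (Real.rpow_nonneg (hpos t ht).le _))
    (sub_nonneg.2 (hidx t ht))

theorem h_kappa_inv_properties_general
    (G g Ginv Ginv' : ℝ → ℝ) (iG sG κ : ℝ)
    (hG' : ∀ t, 0 < t → HasDerivAt G (g t) t)
    (hGpos : ∀ t, 0 < t → 0 < G t)
    (hgpos : ∀ t, 0 < t → 0 < g t)
    (hle : iG ≤ sG)
    (hbd : ∀ t, 0 < t → iG * G t ≤ t * g t ∧ t * g t ≤ sG * G t)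
    (hκ₁ : 1 ≤ κ) (hκ₂ : κ < iG)
    (hGinv : ∀ t, 0 ≤ t → Ginv (G t) = t ∧ G (Ginv t) = t ∧ 0 ≤ Ginv t)
    (hGinv' : ∀ t, 0 < t → HasDerivAt Ginv (Ginv' t) t)
    (hinv hκfun : ℝ → ℝ)
    (hhinv : ∀ t, hinv t = ∫ τ in (0:ℝ)..t, (Ginv τ) ^ (-κ))
    (hκinv : ∀ t, 0 ≤ t → hκfun (hinv t) = t ∧ hinv (hκfun t) = t) :
    (∀ t, 0 < t →
      -1 < -(κ / iG) ∧
      -(κ / iG) ≤ -(κ * t * Ginv' t / Ginv t) ∧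
      -(κ * t * Ginv' t / Ginv t) ≤ -(κ / sG) ∧
      -(κ / sG) < 0) ∧
    StrictMonoOn hinv (Set.Ici 0) ∧
    ConcaveOn ℝ (Set.Ici 0) hinv ∧
    ∃ c₁ c₂ : ℝ, 0 < c₁ ∧ 0 < c₂ ∧ ∀ t, 0 < t →
      c₁ * G t ≤ hκfun (G t / t ^ κ) ∧ hκfun (G t / t ^ κ) ≤ c₂ * G t := by
  have hκ : 0 < κ := by linarith
  have hiG : 0 < iG := by linarith
  have hsG : 0 < sG := hiG.trans_le hle
  have hp : κ / iG < 1 := (div_lt_one hiG).2 hκ₂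
  have hGGinv : ∀ t, 0 ≤ t → G (Ginv t) = t := fun t ht => (hGinv t ht).2.1
  have hpos : ∀ t, 0 < t → 0 < Ginv t :=
    fun t => pos_of_rightInverse hGpos hGGinv fun t ht => (hGinv t ht).2.2
  have hidx := fun t (ht : 0 < t) => index_bounds_rightInverse hG' hgpos hbd hGGinv hGinv' hpos ht
  have hFpos : ∀ t, 0 < t → 0 < Ginv t ^ (-κ) := fun t ht => Real.rpow_pos_of_pos (hpos t ht) _
  have hFcont : ContinuousOn (fun τ => Ginv τ ^ (-κ)) (Ioi 0) := fun t ht =>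
    ((hGinv' t ht).continuousAt.rpow_const (Or.inl (hpos t ht).ne')).continuousWithinAt
  have hFanti : AntitoneOn (fun τ => Ginv τ ^ (-κ)) (Ioi 0) := fun a ha b hb hab =>
    Real.rpow_le_rpow_of_nonpos (hpos a ha)
      ((strictMonoOn_rightInverse hG' hgpos hGGinv hGinv' hpos).monotoneOn ha hb hab)
      (neg_nonpos.2 hκ.le)
  have hFmono := monotoneOn_rpow_neg_mul_rpow_of_index_le hiG hκ.le hGinv' hpos
    fun t ht => (hidx t ht).1
  have hint := fun x (hx : 0 < x) => intervalIntegrable_of_monotoneOn_mul_rpow hFcont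
    (fun t ht => (hFpos t ht).le) hFmono hp hx
  obtain rfl : hinv = fun u => ∫ τ in (0 : ℝ)..u, Ginv τ ^ (-κ) := funext hhinv
  refine ⟨fun t ht => ?_, strictMonoOn_primitive hFcont hint hFpos,
    concaveOn_primitive hFcont hint hFanti, (1 - κ / iG) ^ (1 - κ / iG)⁻¹, 1,
    Real.rpow_pos_of_pos (by linarith) _, one_pos, fun t ht => ?_⟩
  · obtain ⟨hlo, hhi⟩ := hidx t ht
    refine ⟨neg_lt_neg hp, ?_, ?_, neg_lt_zero.2 (div_pos hκ hsG)⟩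
    · rw [neg_le_neg_iff, div_le_div_iff₀ (hpos t ht) hiG]
      nlinarith
    · rw [neg_le_neg_iff, div_le_div_iff₀ hsG (hpos t ht)]
      nlinarith
  · have := mem_Icc_of_leftInverse_primitive (fun u hu => (hκinv u hu).1) hint hFanti hFmono
      (div_nonneg hκ.le hiG.le) hp (hGpos t ht)
    rw [(hGinv t ht.le).1, Real.rpow_neg ht.le, ← div_eq_mul_inv] at this
    rwa [one_mul]

/-- Properties of h_κ^{-1}(t) = ∫_0^t [G^{-1}(τ)]^{-κ} dτ for κ ∈ [1, i_G):
the logarithmic derivative ratio lies in [−κ/i_G, −κ/s_G] ⊂ (−1,0), h_κ^{-1}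
is increasing and concave on [0,∞), and h_κ(G(t)/t^κ) ≈ G(t). -/
theorem h_kappa_inv_properties
    (G g Ginv Ginv' : ℝ → ℝ) (iG sG κ : ℝ)
    (hG' : ∀ t, 0 < t → HasDerivAt G (g t) t)
    (hGpos : ∀ t, 0 < t → 0 < G t)
    (hgpos : ∀ t, 0 < t → 0 < g t)
    (h1 : 1 < iG) (hle : iG ≤ sG)
    (hbd : ∀ t, 0 < t → iG * G t ≤ t * g t ∧ t * g t ≤ sG * G t)
    (hκ₁ : 1 ≤ κ) (hκ₂ : κ < iG)
    (hGinv : ∀ t, 0 ≤ t → Ginv (G t) = t ∧ G (Ginv t) = t ∧ 0 ≤ Ginv t)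
    (hGinv' : ∀ t, 0 < t → HasDerivAt Ginv (Ginv' t) t)
    (hinv hκfun : ℝ → ℝ)
    (hhinv : ∀ t, hinv t = ∫ τ in (0:ℝ)..t, (Ginv τ) ^ (-κ))
    (hκinv : ∀ t, 0 ≤ t → hκfun (hinv t) = t ∧ hinv (hκfun t) = t) :
    (∀ t, 0 < t →
      -1 < -(κ / iG) ∧
      -(κ / iG) ≤ -(κ * t * Ginv' t / Ginv t) ∧
      -(κ * t * Ginv' t / Ginv t) ≤ -(κ / sG) ∧
      -(κ / sG) < 0) ∧
    StrictMonoOn hinv (Set.Ici 0) ∧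
    ConcaveOn ℝ (Set.Ici 0) hinv ∧
    ∃ c₁ c₂ : ℝ, 0 < c₁ ∧ 0 < c₂ ∧ ∀ t, 0 < t →
      c₁ * G t ≤ hκfun (G t / t ^ κ) ∧ hκfun (G t / t ^ κ) ≤ c₂ * G t :=
  h_kappa_inv_properties_general G g Ginv Ginv' iG sG κ hG' hGpos hgpos hle hbd hκ₁ hκ₂ hGinv hGinv'
    hinv hκfun hhinv hκinv
end

section
/- Let h_κ be as above (inverse of t ↦ ∫_0^t [G^{-1}(τ)]^{-κ} dτ) with 1 ≤ κ < i_G. Then the Young conjugate h_κ* satisfies h_κ*(t) ≈ G(t^{1/κ}) with constants depending only on i_G, s_G, κ. -/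
/-! The index bounds make `G u * u ^ (-iG)` nondecreasing and `G u * u ^ (-sG)` nonincreasing.
By the first, `τ ^ (κ / iG) * G⁻¹(τ) ^ (-κ)` is nondecreasing, so on `(0, T]` the integrand of
`h_κ⁻¹` lies between its value at `T` and a multiple of `τ ^ (-κ / iG)`, where `κ / iG < 1`;
integrating gives `h_κ⁻¹(G u) ≈ G u * u ^ (-κ)`. Taking `τ = h_κ⁻¹(G u)` with `u ^ κ = t / 2` in
the supremum gives the lower bound. For the upper bound write `h_κ τ = G u`: then `t τ - G u ≤ 0`
once `u ^ κ ≥ C t`, and otherwise `t τ ≤ G((C t) ^ (1 / κ))`. The second index bound compares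
`G` at a fixed multiple of `t ^ (1 / κ)` with `G(t ^ (1 / κ))`. -/

open Real Set Filter MeasureTheory

section IndexBounds

variable {G g : ℝ → ℝ} {c : ℝ}

theorem antitoneOn_mul_rpow_neg_of_mul_le (hG : ∀ t, 0 < t → HasDerivAt G (g t) t)
    (hc : ∀ t, 0 < t → t * g t ≤ c * G t) :
    AntitoneOn (fun t => G t * t ^ (-c)) (Ioi 0) := by
  have hderiv : ∀ t, 0 < t → HasDerivAt (fun t => G t * t ^ (-c))
      (g t * t ^ (-c) + G t * (-c * t ^ (-c - 1))) t := fun t ht =>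
    (hG t ht).mul (hasDerivAt_rpow_const (Or.inl ht.ne'))
  refine antitoneOn_of_hasDerivWithinAt_nonpos (convex_Ioi 0)
    (fun t ht => (hderiv t ht).continuousAt.continuousWithinAt)
    (fun t ht => (hderiv t (by rwa [interior_Ioi] at ht)).hasDerivWithinAt) fun t ht => ?_
  rw [interior_Ioi, mem_Ioi] at ht
  have h : g t * t ^ (-c) + G t * (-c * t ^ (-c - 1)) = t ^ (-c) / t * (t * g t - c * G t) := by
    rw [rpow_sub_one ht.ne']; field_simp; ring
  rw [h]
  exact mul_nonpos_of_nonneg_of_nonpos (by positivity) (sub_nonpos.2 (hc t ht))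

theorem monotoneOn_mul_rpow_neg_of_le_mul (hG : ∀ t, 0 < t → HasDerivAt G (g t) t)
    (hc : ∀ t, 0 < t → c * G t ≤ t * g t) :
    MonotoneOn (fun t => G t * t ^ (-c)) (Ioi 0) := by
  have h := antitoneOn_mul_rpow_neg_of_mul_le (G := -G) (g := -g) (c := c)
    (fun t ht => (hG t ht).neg) (fun t ht => by simpa using hc t ht)
  intro a ha b hb hab
  simpa using h ha hb hab

theorem apply_mul_le_rpow_mul (hG : AntitoneOn (fun t => G t * t ^ (-c)) (Ioi 0))
    {α u : ℝ} (hα : 1 ≤ α) (hu : 0 < u) : G (α * u) ≤ α ^ c * G u := by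
  have hα0 : 0 < α := zero_lt_one.trans_le hα
  have h := hG hu (mul_pos hα0 hu) (le_mul_of_one_le_left hu.le hα)
  simp only [mul_rpow hα0.le hu.le, rpow_neg hα0.le, rpow_neg hu.le] at h
  have hαc : 0 < α ^ c := rpow_pos_of_pos hα0 c
  have huc : 0 < u ^ c := rpow_pos_of_pos hu c
  field_simp at h
  linarith

end IndexBounds

section Integrals

variable {F : ℝ → ℝ} {θ T : ℝ}

theorem AntitoneOn.sub_mul_le_integral {a b : ℝ} (hab : a ≤ b) (hF : AntitoneOn F (Ioc a b))
    (hint : IntervalIntegrable F volume a b) : (b - a) * F b ≤ ∫ τ in a..b, F τ := by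
  rcases hab.eq_or_lt with rfl | hlt
  · simp
  have hb : b ∈ Ioc a b := ⟨hlt, le_rfl⟩
  calc (b - a) * F b = ∫ _ in a..b, F b := by simp
    _ ≤ ∫ τ in a..b, F τ := intervalIntegral.integral_mono_on_of_le_Ioo hab
        intervalIntegrable_const hint fun τ hτ => hF (Ioo_subset_Ioc_self hτ) hb hτ.2.le

theorem le_mul_rpow_neg_of_rpow_mul_le {a x τ : ℝ} (hτ : 0 < τ) (h : τ ^ θ * x ≤ a) :
    x ≤ a * τ ^ (-θ) := by
  rw [rpow_neg hτ.le, ← div_eq_mul_inv, le_div_iff₀ (rpow_pos_of_pos hτ θ), mul_comm]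
  exact h

theorem intervalIntegrable_of_rpow_mul_le (hθ : θ < 1) (hT : 0 < T)
    (hF : AntitoneOn F (Ioc 0 T)) (hdecay : ∀ τ ∈ Ioc 0 T, τ ^ θ * F τ ≤ T ^ θ * F T)
    (hFT : 0 ≤ F T) : IntervalIntegrable F volume 0 T := by
  have hmaj : IntervalIntegrable (fun τ => T ^ θ * F T * τ ^ (-θ)) volume 0 T :=
    (intervalIntegral.intervalIntegrable_rpow' (by linarith)).const_mul _
  rw [intervalIntegrable_iff_integrableOn_Ioc_of_le hT.le] at hmaj ⊢
  refine hmaj.mono' (aemeasurable_restrict_of_antitoneOn measurableSet_Ioc hF).aestronglyMeasurable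
    ((ae_restrict_iff' measurableSet_Ioc).2 (ae_of_all _ fun τ hτ => ?_))
  rw [Real.norm_eq_abs, abs_of_nonneg (hFT.trans (hF hτ ⟨hT, le_rfl⟩ hτ.2))]
  exact le_mul_rpow_neg_of_rpow_mul_le hτ.1 (hdecay τ hτ)

theorem integral_le_of_rpow_mul_le (hθ : θ < 1) (hT : 0 < T)
    (hint : IntervalIntegrable F volume 0 T)
    (hdecay : ∀ τ ∈ Ioc 0 T, τ ^ θ * F τ ≤ T ^ θ * F T) :
    ∫ τ in 0..T, F τ ≤ (1 - θ)⁻¹ * (T * F T) := by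
  have hθ' : -θ + 1 ≠ 0 := by linarith
  have h1θ : 1 - θ ≠ 0 := by linarith
  calc ∫ τ in 0..T, F τ ≤ ∫ τ in 0..T, T ^ θ * F T * τ ^ (-θ) :=
        intervalIntegral.integral_mono_on_of_le_Ioo hT.le hint
          ((intervalIntegral.intervalIntegrable_rpow' (by linarith)).const_mul _)
          fun τ hτ => le_mul_rpow_neg_of_rpow_mul_le hτ.1 (hdecay τ (Ioo_subset_Ioc_self hτ))
    _ = (1 - θ)⁻¹ * (T * F T) := by
        rw [intervalIntegral.integral_const_mul, integral_rpow (Or.inl (by linarith)),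
          zero_rpow hθ', sub_zero, rpow_add hT, rpow_one]
        have hTθ : 0 < T ^ θ := rpow_pos_of_pos hT θ
        rw [rpow_neg hT.le, show -θ + 1 = 1 - θ by ring]
        field_simp

theorem exists_pos_integral_eq {f : ℝ → ℝ} (hf : ∀ T, 0 < T → IntervalIntegrable f volume 0 T)
    (hunbdd : ∀ y, ∃ T, 0 < T ∧ y ≤ ∫ τ in 0..T, f τ) {y : ℝ} (hy : 0 < y) :
    ∃ T, 0 < T ∧ ∫ τ in 0..T, f τ = y := by
  obtain ⟨M, hM, hyM⟩ := hunbdd y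
  have hcont : ContinuousOn (fun T => ∫ τ in 0..T, f τ) (Icc 0 M) := by
    rw [← uIcc_of_le hM.le]
    exact intervalIntegral.continuousOn_primitive_interval' (hf M hM) left_mem_uIcc
  obtain ⟨T, hT, hTy⟩ := intermediate_value_Icc hM.le hcont ⟨by simpa using hy.le, hyM⟩
  refine ⟨T, hT.1.lt_of_ne ?_, hTy⟩
  rintro rfl
  simp [hy.ne] at hTy

end Integrals

section Inverse

variable {G Ginv : ℝ → ℝ} {c κ : ℝ}

theorem pos_of_rightInvOn (hG : ∀ t, 0 < t → 0 < G t)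
    (hGinv : ∀ t, 0 ≤ t → G (Ginv t) = t ∧ 0 ≤ Ginv t) {τ : ℝ} (hτ : 0 < τ) : 0 < Ginv τ := by
  refine (hGinv τ hτ.le).2.lt_of_ne fun h => ?_
  have hG0 : G 0 = τ := by rw [h]; exact (hGinv τ hτ.le).1
  obtain ⟨hGGinv0, hGinv0⟩ := hGinv 0 le_rfl
  rcases hGinv0.eq_or_lt with h0 | h0
  · rw [← h0, hG0] at hGGinv0
    exact hτ.ne' hGGinv0
  · exact (hG _ h0).ne' hGGinv0

theorem monotoneOn_of_rightInvOn (hG : StrictMonoOn G (Ioi 0)) (hpos : ∀ τ, 0 < τ → 0 < Ginv τ)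
    (hGGinv : ∀ τ, 0 < τ → G (Ginv τ) = τ) : MonotoneOn Ginv (Ioi 0) := fun a ha b hb hab =>
  (hG.le_iff_le (hpos a ha) (hpos b hb)).1 (by rwa [hGGinv a ha, hGGinv b hb])

theorem rpow_mul_rpow_neg_le (hφ : MonotoneOn (fun u => G u * u ^ (-c)) (Ioi 0))
    (hc : 0 < c) (hκ : 0 ≤ κ) (hpos : ∀ τ, 0 < τ → 0 < Ginv τ)
    (hmono : MonotoneOn Ginv (Ioi 0)) (hGGinv : ∀ τ, 0 < τ → G (Ginv τ) = τ)
    {τ T : ℝ} (hτ : 0 < τ) (hτT : τ ≤ T) :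
    τ ^ (κ / c) * Ginv τ ^ (-κ) ≤ T ^ (κ / c) * Ginv T ^ (-κ) := by
  have hT : 0 < T := hτ.trans_le hτT
  have key : ∀ s, 0 < s → s ^ (κ / c) * Ginv s ^ (-κ) = (G (Ginv s) * Ginv s ^ (-c)) ^ (κ / c) :=
    fun s hs => by
      rw [hGGinv s hs, mul_rpow hs.le (rpow_nonneg (hpos s hs).le _), ← rpow_mul (hpos s hs).le]
      congr 2
      field_simp
  rw [key τ hτ, key T hT]
  exact rpow_le_rpow (mul_nonneg (by rw [hGGinv τ hτ]; exact hτ.le) (rpow_nonneg (hpos τ hτ).le _))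
    (hφ (hpos τ hτ) (hpos T hT) (hmono hτ hT hτT)) (div_nonneg hκ hc.le)

theorem integral_rpow_neg_bounds (hφ : MonotoneOn (fun u => G u * u ^ (-c)) (Ioi 0))
    (hκ : 0 ≤ κ) (hκc : κ < c) (hpos : ∀ τ, 0 < τ → 0 < Ginv τ)
    (hmono : MonotoneOn Ginv (Ioi 0)) (hGGinv : ∀ τ, 0 < τ → G (Ginv τ) = τ) {T : ℝ} (hT : 0 < T) :
    IntervalIntegrable (fun τ => Ginv τ ^ (-κ)) volume 0 T ∧
      T * Ginv T ^ (-κ) ≤ ∫ τ in 0..T, Ginv τ ^ (-κ) ∧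
      ∫ τ in 0..T, Ginv τ ^ (-κ) ≤ (1 - κ / c)⁻¹ * (T * Ginv T ^ (-κ)) := by
  have hc : 0 < c := hκ.trans_lt hκc
  have hθ : κ / c < 1 := (div_lt_one hc).2 hκc
  have hanti : AntitoneOn (fun τ => Ginv τ ^ (-κ)) (Ioc 0 T) := fun a ha b hb hab =>
    rpow_le_rpow_of_nonpos (hpos a ha.1) (hmono ha.1 hb.1 hab) (neg_nonpos.2 hκ)
  have hdecay : ∀ τ ∈ Ioc 0 T, τ ^ (κ / c) * Ginv τ ^ (-κ) ≤ T ^ (κ / c) * Ginv T ^ (-κ) :=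
    fun τ hτ => rpow_mul_rpow_neg_le hφ hc hκ hpos hmono hGGinv hτ.1 hτ.2
  have hint := intervalIntegrable_of_rpow_mul_le hθ hT hanti hdecay
    (rpow_nonneg (hpos T hT).le _)
  refine ⟨hint, ?_, integral_le_of_rpow_mul_le hθ hT hint hdecay⟩
  simpa using hanti.sub_mul_le_integral hT.le hint

theorem tendsto_mul_rpow_neg_atTop (hφ : MonotoneOn (fun u => G u * u ^ (-c)) (Ioi 0))
    (hG1 : 0 < G 1) (hκc : κ < c) : Tendsto (fun u => G u * u ^ (-κ)) atTop atTop := by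
  refine tendsto_atTop_mono' _ ?_ ((tendsto_rpow_atTop (sub_pos.2 hκc)).const_mul_atTop hG1)
  filter_upwards [eventually_ge_atTop 1] with u hu
  have hu0 : 0 < u := zero_lt_one.trans_le hu
  have h := hφ (mem_Ioi.2 zero_lt_one) hu0 hu
  simp only [one_rpow, mul_one] at h
  calc G 1 * u ^ (c - κ) ≤ G u * u ^ (-c) * u ^ (c - κ) :=
        mul_le_mul_of_nonneg_right h (rpow_nonneg hu0.le _)
    _ = G u * u ^ (-κ) := by rw [mul_assoc, ← rpow_add hu0]; ring_nf

theorem integral_rpow_neg_inverse_bounds (hGpos : ∀ t, 0 < t → 0 < G t)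
    (hφ : MonotoneOn (fun u => G u * u ^ (-c)) (Ioi 0)) (hκ : 0 ≤ κ) (hκc : κ < c)
    (hpos : ∀ τ, 0 < τ → 0 < Ginv τ) (hmono : MonotoneOn Ginv (Ioi 0))
    (hGGinv : ∀ τ, 0 < τ → G (Ginv τ) = τ) (hGinvG : ∀ u, 0 < u → Ginv (G u) = u) {H : ℝ → ℝ}
    (hH : ∀ T, 0 ≤ T → H (∫ τ in 0..T, Ginv τ ^ (-κ)) = T) :
    (∀ u, 0 < u → ∃ τ, 0 < τ ∧ H τ = G u ∧ G u * u ^ (-κ) ≤ τ) ∧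
      ∀ τ, 0 < τ → ∃ u, 0 < u ∧ H τ = G u ∧ τ ≤ (1 - κ / c)⁻¹ * (G u * u ^ (-κ)) := by
  have hbounds := fun T (hT : 0 < T) => integral_rpow_neg_bounds hφ hκ hκc hpos hmono hGGinv hT
  have hlower : ∀ u, 0 < u → G u * u ^ (-κ) ≤ ∫ τ in 0..G u, Ginv τ ^ (-κ) := fun u hu => by
    simpa [hGinvG u hu] using (hbounds (G u) (hGpos u hu)).2.1
  refine ⟨fun u hu => ⟨_, (mul_pos (hGpos u hu) (rpow_pos_of_pos hu _)).trans_le (hlower u hu),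
    hH _ (hGpos u hu).le, hlower u hu⟩, fun τ hτ => ?_⟩
  have hunbdd : ∀ y, ∃ T, 0 < T ∧ y ≤ ∫ τ in 0..T, Ginv τ ^ (-κ) := fun y => by
    obtain ⟨u, hyu, hu⟩ := (((tendsto_mul_rpow_neg_atTop hφ (hGpos 1 one_pos) hκc)
      |>.eventually_ge_atTop y).and (eventually_gt_atTop 0)).exists
    exact ⟨G u, hGpos u hu, hyu.trans (hlower u hu)⟩
  obtain ⟨T, hT, rfl⟩ := exists_pos_integral_eq (fun T hT => (hbounds T hT).1) hunbdd hτ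
  exact ⟨Ginv T, hpos T hT, by rw [hH T hT.le, hGGinv T hT], by
    simpa [hGGinv T hT] using (hbounds T hT).2.2⟩

end Inverse

section Conjugate

variable {G H : ℝ → ℝ} {κ s : ℝ}

theorem exists_le_rpow_mul_sub (hκ : 0 < κ) (hG : AntitoneOn (fun t => G t * t ^ (-s)) (Ioi 0))
    (hH : ∀ u, 0 < u → ∃ τ, 0 < τ ∧ H τ = G u ∧ G u * u ^ (-κ) ≤ τ) {v : ℝ} (hv : 0 < v) :
    ∃ τ, 0 < τ ∧ (((2 : ℝ) ^ κ⁻¹) ^ s)⁻¹ * G v ≤ v ^ κ * τ - H τ := by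
  have h2 : (1 : ℝ) ≤ 2 ^ κ⁻¹ := one_le_rpow one_le_two (inv_nonneg.2 hκ.le)
  set u := v / 2 ^ κ⁻¹ with hu_def
  have hu : 0 < u := by positivity
  have hvu : 2 ^ κ⁻¹ * u = v := mul_div_cancel₀ v (by positivity)
  have huκ : u ^ (-κ) * v ^ κ = 2 := by
    rw [rpow_neg hu.le, hu_def, div_rpow hv.le (by positivity), rpow_inv_rpow zero_le_two hκ.ne']
    field_simp
  obtain ⟨τ, hτ, hHτ, hτu⟩ := hH u hu
  refine ⟨τ, hτ, ?_⟩
  have hscale := apply_mul_le_rpow_mul hG h2 hu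
  rw [hvu] at hscale
  calc (((2 : ℝ) ^ κ⁻¹) ^ s)⁻¹ * G v ≤ G u := by
        rw [inv_mul_le_iff₀ (by positivity)]; exact hscale
    _ = v ^ κ * (G u * u ^ (-κ)) - G u := by linear_combination (G u) * huκ.symm
    _ ≤ v ^ κ * τ - H τ := by
        rw [hHτ]; exact sub_le_sub_right (mul_le_mul_of_nonneg_left hτu (by positivity)) _

theorem rpow_mul_sub_le {C : ℝ} (hκ : 0 < κ) (hC : 1 ≤ C) (hGpos : ∀ t, 0 < t → 0 < G t)
    (hG : AntitoneOn (fun t => G t * t ^ (-s)) (Ioi 0))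
    (hφ : MonotoneOn (fun u => G u * u ^ (-κ)) (Ioi 0))
    (hH : ∀ τ, 0 < τ → ∃ u, 0 < u ∧ H τ = G u ∧ τ ≤ C * (G u * u ^ (-κ))) {v τ : ℝ} (hv : 0 < v)
    (hτ : 0 < τ) : v ^ κ * τ - H τ ≤ (C ^ κ⁻¹) ^ s * G v := by
  have hC' : (1 : ℝ) ≤ C ^ κ⁻¹ := one_le_rpow hC (inv_nonneg.2 hκ.le)
  set u₀ := C ^ κ⁻¹ * v with hu₀_def
  have hu₀ : 0 < u₀ := by positivity
  have hu₀κ : v ^ κ * C * u₀ ^ (-κ) = 1 := by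
    rw [rpow_neg hu₀.le, hu₀_def, mul_rpow (by positivity) hv.le,
      rpow_inv_rpow (by linarith) hκ.ne']
    field_simp
  obtain ⟨u, hu, hHτ, hτu⟩ := hH τ hτ
  have hτ_le : v ^ κ * τ ≤ v ^ κ * C * (G u * u ^ (-κ)) := by
    rw [mul_assoc]; exact mul_le_mul_of_nonneg_left hτu (by positivity)
  rw [hHτ]
  rcases le_total u₀ u with hle | hle
  · calc v ^ κ * τ - G u ≤ v ^ κ * C * (G u * u₀ ^ (-κ)) - G u := by
          refine sub_le_sub_right (hτ_le.trans (mul_le_mul_of_nonneg_left ?_ (by positivity))) _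
          exact mul_le_mul_of_nonneg_left (rpow_le_rpow_of_nonpos hu₀ hle (by linarith))
            (hGpos u hu).le
      _ = 0 := by linear_combination (G u) * hu₀κ
      _ ≤ (C ^ κ⁻¹) ^ s * G v := mul_nonneg (by positivity) (hGpos v hv).le
  · calc v ^ κ * τ - G u ≤ v ^ κ * C * (G u₀ * u₀ ^ (-κ)) - 0 :=
          sub_le_sub (hτ_le.trans (mul_le_mul_of_nonneg_left (hφ hu hu₀ hle) (by positivity)))
            (hGpos u hu).le
      _ = G u₀ := by linear_combination (G u₀) * hu₀κ
      _ ≤ (C ^ κ⁻¹) ^ s * G v := apply_mul_le_rpow_mul hG hC' hv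

end Conjugate

theorem h_kappa_conjugate_comparable_general
    (G g Ginv : ℝ → ℝ) (iG sG κ : ℝ)
    (hG' : ∀ t, 0 < t → HasDerivAt G (g t) t)
    (hGpos : ∀ t, 0 < t → 0 < G t)
    (hgpos : ∀ t, 0 < t → 0 < g t)
    (hbd : ∀ t, 0 < t → iG * G t ≤ t * g t ∧ t * g t ≤ sG * G t)
    (hκ₁ : 1 ≤ κ) (hκ₂ : κ < iG)
    (hGinv : ∀ t, 0 ≤ t → Ginv (G t) = t ∧ G (Ginv t) = t ∧ 0 ≤ Ginv t)
    (hinv hκfun : ℝ → ℝ)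
    (hhinv : ∀ t, hinv t = ∫ τ in (0:ℝ)..t, (Ginv τ) ^ (-κ))
    (hκinv : ∀ t, 0 ≤ t → hκfun (hinv t) = t ∧ hinv (hκfun t) = t) :
    ∃ c₁ c₂ : ℝ, 0 < c₁ ∧ 0 < c₂ ∧ ∀ t, 0 < t →
      (↑(c₁ * G (t ^ (1 / κ))) : EReal) ≤
        (⨆ τ : {τ : ℝ // 0 < τ}, (↑(t * τ.1 - hκfun τ.1) : EReal)) ∧
      (⨆ τ : {τ : ℝ // 0 < τ}, (↑(t * τ.1 - hκfun τ.1) : EReal)) ≤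
        (↑(c₂ * G (t ^ (1 / κ))) : EReal) := by
  have hκ : 0 < κ := by linarith
  have hGGinv : ∀ τ, 0 < τ → G (Ginv τ) = τ := fun τ hτ => (hGinv τ hτ.le).2.1
  have hGinv_pos : ∀ τ, 0 < τ → 0 < Ginv τ := fun τ =>
    pos_of_rightInvOn hGpos fun t ht => (hGinv t ht).2
  have hGmono : StrictMonoOn G (Ioi 0) :=
    strictMonoOn_of_hasDerivWithinAt_pos (convex_Ioi 0)
      (fun t ht => (hG' t ht).continuousAt.continuousWithinAt)
      (by simpa using fun t ht => (hG' t ht).hasDerivWithinAt) (by simpa using hgpos)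
  have hψ := antitoneOn_mul_rpow_neg_of_mul_le hG' fun t ht => (hbd t ht).2
  have hφκ := monotoneOn_mul_rpow_neg_of_le_mul hG' fun t ht =>
    (mul_le_mul_of_nonneg_right hκ₂.le (hGpos t ht).le).trans (hbd t ht).1
  obtain ⟨hlower, hupper⟩ := integral_rpow_neg_inverse_bounds hGpos
    (monotoneOn_mul_rpow_neg_of_le_mul hG' fun t ht => (hbd t ht).1) hκ.le hκ₂ hGinv_pos
    (monotoneOn_of_rightInvOn hGmono hGinv_pos hGGinv) hGGinv (fun u hu => (hGinv u hu.le).1)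
    fun T hT => hhinv T ▸ (hκinv T hT).1
  have hC : 1 ≤ (1 - κ / iG)⁻¹ :=
    (one_le_inv₀ (by rw [sub_pos, div_lt_one (by linarith)]; exact hκ₂)).2
      (sub_le_self _ (div_nonneg hκ.le (by linarith)))
  refine ⟨(((2 : ℝ) ^ κ⁻¹) ^ sG)⁻¹, ((1 - κ / iG)⁻¹ ^ κ⁻¹) ^ sG, by positivity,
    rpow_pos_of_pos (rpow_pos_of_pos (by linarith) _) _, fun t ht => ?_⟩
  have hv : 0 < t ^ (1 / κ) := rpow_pos_of_pos ht _
  have ht' : (t ^ (1 / κ)) ^ κ = t := by rw [one_div, rpow_inv_rpow ht.le hκ.ne']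
  obtain ⟨τ₀, hτ₀, hle⟩ := exists_le_rpow_mul_sub hκ hψ hlower hv
  rw [ht'] at hle
  refine ⟨le_iSup_of_le ⟨τ₀, hτ₀⟩ (EReal.coe_le_coe_iff.2 hle),
    iSup_le fun τ => EReal.coe_le_coe_iff.2 ?_⟩
  simpa only [ht'] using rpow_mul_sub_le hκ hC hGpos hψ hφκ hupper hv τ.2

/-- The Young conjugate of h_κ satisfies h_κ*(t) ≈ G(t^{1/κ}). -/
theorem h_kappa_conjugate_comparable
    (G g Ginv : ℝ → ℝ) (iG sG κ : ℝ)
    (hG' : ∀ t, 0 < t → HasDerivAt G (g t) t)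
    (hGpos : ∀ t, 0 < t → 0 < G t)
    (hgpos : ∀ t, 0 < t → 0 < g t)
    (h1 : 1 < iG) (hle : iG ≤ sG)
    (hbd : ∀ t, 0 < t → iG * G t ≤ t * g t ∧ t * g t ≤ sG * G t)
    (hκ₁ : 1 ≤ κ) (hκ₂ : κ < iG)
    (hGinv : ∀ t, 0 ≤ t → Ginv (G t) = t ∧ G (Ginv t) = t ∧ 0 ≤ Ginv t)
    (hinv hκfun : ℝ → ℝ)
    (hhinv : ∀ t, hinv t = ∫ τ in (0:ℝ)..t, (Ginv τ) ^ (-κ))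
    (hκinv : ∀ t, 0 ≤ t → hκfun (hinv t) = t ∧ hinv (hκfun t) = t) :
    ∃ c₁ c₂ : ℝ, 0 < c₁ ∧ 0 < c₂ ∧ ∀ t, 0 < t →
      (↑(c₁ * G (t ^ (1 / κ))) : EReal) ≤
        (⨆ τ : {τ : ℝ // 0 < τ}, (↑(t * τ.1 - hκfun τ.1) : EReal)) ∧
      (⨆ τ : {τ : ℝ // 0 < τ}, (↑(t * τ.1 - hκfun τ.1) : EReal)) ≤
        (↑(c₂ * G (t ^ (1 / κ))) : EReal) :=
  h_kappa_conjugate_comparable_general G g Ginv iG sG κ hG' hGpos hgpos hbd hκ₁ hκ₂ hGinv hinv hκfun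
    hhinv hκinv
end
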